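/- arXiv:1506.07851 — 6 statements merged into one kernel-verified Lean document; each statement's English description precedes it below -/
import Mathlib

section
/- Let X be a complete metric space, Γ ⊆ Σ compact with σ(Γ) ⊆ Γ, and {E_i : i ∈ Γ_*} a Moran construction satisfying (M3): there exists D ≥ 1 such that diam(E_{ij}) ≤ D·diam(E_i)·diam(E_j) whenever ij ∈ Γ_*. Then there exist constants C ≥ 1 and 0 < ᾱ < 1 such that max_{i ∈ Γ_n} diam(E_i) ≤ C·ᾱ^n for all n ∈ ℕ. -/
open Metric Filter

/-- The left shift on `Σ = {1,…,κ}^ℕ`. -/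
def shiftMap {κ : ℕ} (x : ℕ → Fin κ) : ℕ → Fin κ := fun n => x (n + 1)

/-- The prefix of length `n` of an infinite word. -/
def pre {κ : ℕ} (x : ℕ → Fin κ) (n : ℕ) : List (Fin κ) := List.ofFn (fun k : Fin n => x k)

/-- `w` belongs to `Γ_*`, the set of finite prefixes of elements of `Γ`. -/
def isPrefixWord {κ : ℕ} (Γ : Set (ℕ → Fin κ)) (w : List (Fin κ)) : Prop :=
  ∃ x ∈ Γ, pre x w.length = w

/-- a Moran construction satisfying (M3) has geometrically decaying
diameters: there are `C ≥ 1` and `0 < ᾱ < 1` with `max_{i ∈ Γ_n} diam(E_i) ≤ C ᾱⁿ`. -/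
theorem moran_diam_decay {X : Type*} [MetricSpace X] [CompleteSpace X]
    {κ : ℕ} (hκ : 2 ≤ κ) (Γ : Set (ℕ → Fin κ)) (hΓc : IsCompact Γ)
    (hΓs : shiftMap '' Γ ⊆ Γ) (E : List (Fin κ) → Set X)
    (hclosed : ∀ w, isPrefixWord Γ w → IsClosed (E w))
    (hbdd : ∀ w, isPrefixWord Γ w → Bornology.IsBounded (E w))
    (hpos : ∀ w, isPrefixWord Γ w → 0 < diam (E w))
    (hM1 : ∀ w, isPrefixWord Γ w → w ≠ [] → E w ⊆ E w.dropLast)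
    (hM2 : ∀ x ∈ Γ, Tendsto (fun n => diam (E (pre x n))) atTop (nhds 0))
    (D : ℝ) (hD : 1 ≤ D)
    (hM3 : ∀ v w : List (Fin κ), isPrefixWord Γ (v ++ w) →
      diam (E (v ++ w)) ≤ D * diam (E v) * diam (E w)) :
    ∃ C : ℝ, 1 ≤ C ∧ ∃ α : ℝ, 0 < α ∧ α < 1 ∧
      ∀ n : ℕ, ∀ x ∈ Γ, diam (E (pre x n)) ≤ C * α ^ n := by
  rcases Γ.eq_empty_or_nonempty with hΓe | ⟨x₀, hx₀⟩
  · exact ⟨1, le_refl 1, 1/2, by norm_num, by norm_num,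
      fun n x hx => absurd hx (by simp [hΓe])⟩
  have hD0 : (0:ℝ) < D := lt_of_lt_of_le one_pos hD
  -- basic facts about `pre`
  have hpre_mem : ∀ x ∈ Γ, ∀ n, isPrefixWord Γ (pre x n) := by
    intro x hx n
    exact ⟨x, hx, by simp [pre]⟩
  have hdropLast : ∀ (x : ℕ → Fin κ) (n : ℕ), (pre x (n+1)).dropLast = pre x n := by
    intro x n
    have h : pre x (n+1) = (pre x n).concat (x n) := by
      unfold pre
      rw [List.ofFn_succ']
      congr 1
    rw [h]
    simp
  have hne : ∀ (x : ℕ → Fin κ) (n : ℕ), pre x (n+1) ≠ [] := by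
    intro x n h
    have := congrArg List.length h
    simp [pre] at this
  have hanti : ∀ x ∈ Γ, ∀ n, diam (E (pre x (n+1))) ≤ diam (E (pre x n)) := by
    intro x hx n
    have h1 := hM1 (pre x (n+1)) (hpre_mem x hx (n+1)) (hne x n)
    rw [hdropLast] at h1
    exact diam_mono h1 (hbdd _ (hpre_mem x hx n))
  have hmono : ∀ x ∈ Γ, ∀ a b : ℕ, a ≤ b →
      diam (E (pre x b)) ≤ diam (E (pre x a)) := by
    intro x hx a b hab
    induction b, hab using Nat.le_induction with
    | base => exact le_refl _
    | succ b hab ih => exact le_trans (hanti x hx b) ih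
  set M : ℝ := diam (E []) with hMdef
  have hpre0 : ∀ (x : ℕ → Fin κ), pre x 0 = [] := by intro x; simp [pre]
  have hM0 : 0 < M := hpos [] ⟨x₀, hx₀, by simp [pre]⟩
  have hbound : ∀ x ∈ Γ, ∀ n, diam (E (pre x n)) ≤ M := by
    intro x hx n
    have := hmono x hx 0 n (Nat.zero_le n)
    rwa [hpre0] at this
  -- shift invariance
  have hshift : ∀ (a : ℕ) (x : ℕ → Fin κ), x ∈ Γ → (fun n => x (n + a)) ∈ Γ := by
    intro a
    induction a with
    | zero => intro x hx; exact hx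
    | succ a ih =>
      intro x hx
      have h1 : shiftMap x ∈ Γ := hΓs ⟨x, hx, rfl⟩
      exact ih (shiftMap x) h1
  -- splitting a prefix
  have hsplit : ∀ (x : ℕ → Fin κ) (a b : ℕ),
      pre x (a + b) = pre x a ++ pre (fun n => x (n + a)) b := by
    intro x a b
    unfold pre
    rw [List.ofFn_add]
    refine congrArg₂ (· ++ ·) ?_ ?_
    · congr 1
    · congr 1
      funext j
      simp [Nat.add_comm]
  -- find m with uniform contraction
  have hc : (0:ℝ) < 1/(2*D) := by positivity
  set U : ℕ → Set (ℕ → Fin κ) := fun n => {x | diam (E (pre x n)) < 1/(2*D)} with hUdef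
  have hopen : ∀ n, IsOpen (U n) := by
    intro n
    have hcont : Continuous (fun (x : ℕ → Fin κ) => (fun k : Fin n => x k)) :=
      continuous_pi fun i => continuous_apply (i : ℕ)
    have : U n = (fun (x : ℕ → Fin κ) => (fun k : Fin n => x k)) ⁻¹'
        {f : Fin n → Fin κ | diam (E (List.ofFn f)) < 1/(2*D)} := rfl
    rw [this]
    exact (isOpen_discrete _).preimage hcont
  have hcover : Γ ⊆ ⋃ n, U n := by
    intro x hx
    have h : ∀ᶠ n in atTop, diam (E (pre x n)) < 1/(2*D) :=
      Tendsto.eventually_lt_const hc (hM2 x hx)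
    obtain ⟨n, hn⟩ := h.exists
    exact Set.mem_iUnion.2 ⟨n, hn⟩
  obtain ⟨t, ht⟩ := hΓc.elim_finite_subcover U hopen hcover
  set m : ℕ := t.sup id + 1 with hmdef
  have hm1 : 1 ≤ m := Nat.le_add_left 1 _
  have hm0 : (0:ℝ) < (m:ℝ) := by exact_mod_cast Nat.lt_of_lt_of_le Nat.zero_lt_one hm1
  have hkey : ∀ x ∈ Γ, D * diam (E (pre x m)) ≤ 1/2 := by
    intro x hx
    obtain ⟨n, hnt, hn⟩ := Set.mem_iUnion₂.1 (ht hx)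
    have hnm : n ≤ m := le_trans (Finset.le_sup (f := id) hnt) (Nat.le_add_right _ 1)
    have h1 : diam (E (pre x m)) ≤ diam (E (pre x n)) := hmono x hx n m hnm
    have h2 : diam (E (pre x m)) < 1/(2*D) := lt_of_le_of_lt h1 hn
    have h3 : D * diam (E (pre x m)) ≤ D * (1/(2*D)) :=
      mul_le_mul_of_nonneg_left h2.le hD0.le
    have h4 : D * (1/(2*D)) = 1/2 := by field_simp
    linarith
  -- geometric decay along multiples of m
  have hgeo : ∀ k : ℕ, ∀ x ∈ Γ, diam (E (pre x (k * m))) ≤ M * (1/2)^k := by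
    intro k
    induction k with
    | zero => intro x hx; simpa using hbound x hx 0
    | succ k ih =>
      intro x hx
      have hy : (fun n => x (n + k*m)) ∈ Γ := hshift _ x hx
      have hsp : pre x ((k+1) * m) = pre x (k*m) ++ pre (fun n => x (n + k*m)) m := by
        rw [Nat.succ_mul]; exact hsplit x (k*m) m
      have h3 := hM3 (pre x (k*m)) (pre (fun n => x (n + k*m)) m)
        (by rw [← hsp]; exact hpre_mem x hx _)
      rw [hsp]
      have hd0 : (0:ℝ) ≤ D * diam (E (pre (fun n => x (n + k*m)) m)) :=
        mul_nonneg hD0.le diam_nonneg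
      calc diam (E (pre x (k*m) ++ pre (fun n => x (n + k*m)) m))
          ≤ D * diam (E (pre x (k*m))) * diam (E (pre (fun n => x (n + k*m)) m)) := h3
        _ = diam (E (pre x (k*m))) * (D * diam (E (pre (fun n => x (n + k*m)) m))) := by ring
        _ ≤ (M * (1/2)^k) * (1/2) :=
            mul_le_mul (ih x hx) (hkey _ hy) hd0 (by positivity)
        _ = M * (1/2)^(k+1) := by ring
  -- assemble constants
  refine ⟨max 1 (2*M), le_max_left _ _, (1/2 : ℝ) ^ ((m:ℝ)⁻¹), Real.rpow_pos_of_pos (by norm_num) _,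
    Real.rpow_lt_one (by norm_num) (by norm_num) (by positivity), ?_⟩
  intro n x hx
  set α : ℝ := (1/2 : ℝ) ^ ((m:ℝ)⁻¹) with hαdef
  have hα0 : 0 < α := Real.rpow_pos_of_pos (by norm_num) _
  set k : ℕ := n / m with hkdef
  set r : ℕ := n % m with hrdef
  have hnkm : m * k + r = n := Nat.div_add_mod n m
  have hrm : r < m := Nat.mod_lt n (Nat.lt_of_lt_of_le Nat.zero_lt_one hm1)
  have h1 : diam (E (pre x n)) ≤ diam (E (pre x (k * m))) :=
    hmono x hx (k*m) n (by rw [Nat.mul_comm]; omega)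
  have h2 : diam (E (pre x (k * m))) ≤ M * (1/2)^k := hgeo k x hx
  have hnR : (n:ℝ) = (m:ℝ) * k + r := by exact_mod_cast hnkm.symm
  have hrR : (r:ℝ) < (m:ℝ) := by exact_mod_cast hrm
  have hle : (m:ℝ)⁻¹ * n ≤ (k:ℝ) + 1 := by
    rw [inv_mul_le_iff₀ hm0]
    nlinarith
  have e1 : α ^ n = (1/2 : ℝ) ^ ((m:ℝ)⁻¹ * n) := by
    rw [hαdef, ← Real.rpow_natCast ((1/2 : ℝ) ^ ((m:ℝ)⁻¹)) n, ← Real.rpow_mul (by norm_num)]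
  have e2 : (1/2 : ℝ) ^ ((k:ℝ)+1) = (1/2:ℝ)^k * (1/2) := by
    rw [Real.rpow_add (by norm_num), Real.rpow_one, Real.rpow_natCast]
  have h3 : (1/2:ℝ)^k * (1/2) ≤ α ^ n := by
    rw [e1, ← e2]
    exact Real.rpow_le_rpow_of_exponent_ge (by norm_num) (by norm_num) hle
  have h4 : M * (1/2:ℝ)^k ≤ (2*M) * α^n := by
    have := mul_le_mul_of_nonneg_left h3 (by positivity : (0:ℝ) ≤ 2*M)
    nlinarith
  have h5 : (2*M) * α^n ≤ max 1 (2*M) * α^n :=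
    mul_le_mul_of_nonneg_right (le_max_right _ _) (pow_nonneg hα0.le n)
  linarith
end

section
/- Let {E_i : i ∈ Γ_*} be a Moran construction satisfying (M3) and the finite clustering property, with limit set E. Then for each N ≥ 1 there exists a constant C ≥ 1 such that for every x ∈ E there is r_x > 0 with #{i ∈ Γ(r) : E_i ∩ B(x, Nr) ≠ ∅} ≤ C for all 0 < r < r_x. Moreover, if the uniform finite clustering property holds then r_x can be taken to be ∞ for all x, and the limit set E is a doubling metric space. -/
open Metric Filter Set

/-- `Γ(r) = {i ∈ Γ_* : diam(E_i) ≤ r < diam(E_{i⁻})}`. -/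
def GammaR {X : Type*} [MetricSpace X] {κ : ℕ} (Γ : Set (ℕ → Fin κ))
    (E : List (Fin κ) → Set X) (r : ℝ) : Set (List (Fin κ)) :=
  {w | isPrefixWord Γ w ∧ w ≠ [] ∧ diam (E w) ≤ r ∧ r < diam (E w.dropLast)}

/-- `Γ(x,r) = {i ∈ Γ(r) : E_i ∩ B(x,r) ≠ ∅}`. -/
def GammaXR {X : Type*} [MetricSpace X] {κ : ℕ} (Γ : Set (ℕ → Fin κ))
    (E : List (Fin κ) → Set X) (x : X) (r : ℝ) : Set (List (Fin κ)) :=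
  {w ∈ GammaR Γ E r | (E w ∩ ball x r).Nonempty}

namespace MoranAux
variable {κ : ℕ} {Γ : Set (ℕ → Fin κ)}

@[simp] lemma pre_length (x : ℕ → Fin κ) (n : ℕ) : (pre x n).length = n := by simp [pre]
@[simp] lemma pre_zero (x : ℕ → Fin κ) : pre x 0 = [] := by simp [pre]

lemma pre_take (x : ℕ → Fin κ) (n k : ℕ) : (pre x n).take k = pre x (min k n) := by
  apply List.ext_getElem
  · simp [pre]
  · intro i h1 h2; simp only [pre, List.getElem_take, List.getElem_ofFn]

lemma pw_take {w : List (Fin κ)} (hw : isPrefixWord Γ w) (k : ℕ) :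
    isPrefixWord Γ (w.take k) := by
  obtain ⟨x, hx, hxw⟩ := hw
  refine ⟨x, hx, ?_⟩
  rw [← hxw, pre_take]; simp

lemma pre_drop (x : ℕ → Fin κ) (n k : ℕ) :
    (pre x n).drop k = pre (fun m => x (m + k)) (n - k) := by
  apply List.ext_getElem
  · simp [pre]
  · intro i h1 h2
    simp only [pre, List.getElem_drop, List.getElem_ofFn]
    congr 1; omega

lemma shift_mem (hΓs : shiftMap '' Γ ⊆ Γ) {x : ℕ → Fin κ} (hx : x ∈ Γ) (k : ℕ) :
    (fun m => x (m + k)) ∈ Γ := by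
  induction k with
  | zero => simpa using hx
  | succ k ih =>
      have : (fun m => x (m + (k+1))) = shiftMap (fun m => x (m + k)) := by
        funext m; simp [shiftMap]; congr 1; omega
      rw [this]; exact hΓs ⟨_, ih, rfl⟩

lemma pw_drop (hΓs : shiftMap '' Γ ⊆ Γ) {w : List (Fin κ)} (hw : isPrefixWord Γ w) (k : ℕ) :
    isPrefixWord Γ (w.drop k) := by
  obtain ⟨x, hx, hxw⟩ := hw
  refine ⟨fun m => x (m + k), shift_mem hΓs hx k, ?_⟩
  rw [← hxw, pre_drop]; simp

lemma dropLast_take {w : List (Fin κ)} {k : ℕ} (hk : k ≤ w.length) :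
    (w.take k).dropLast = w.take (k - 1) := by
  rw [List.dropLast_eq_take, List.take_take, List.length_take]
  congr 1; omega

variable {X : Type*} [MetricSpace X] {E : List (Fin κ) → Set X}

lemma nested (hM1 : ∀ w, isPrefixWord Γ w → w ≠ [] → E w ⊆ E w.dropLast)
    {w : List (Fin κ)} (hw : isPrefixWord Γ w) (k : ℕ) :
    E w ⊆ E (w.take k) := by
  rcases le_or_gt w.length k with h | h
  · rw [List.take_of_length_le h]
  · have key : ∀ j, E w ⊆ E (w.take (w.length - j)) := by
      intro j
      induction j with
      | zero => simp
      | succ j ih =>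
          rcases le_or_gt (w.length - j) 0 with h0 | h0
          · have : w.length - (j+1) = w.length - j := by omega
            rw [this]; exact ih
          · have hsub : E (w.take (w.length - j)) ⊆ E (w.take (w.length - (j+1))) := by
              have hne : w.take (w.length - j) ≠ [] := by
                intro hc
                have := congrArg List.length hc
                simp [List.length_take] at this
                omega
              have := hM1 _ (pw_take hw _) hne
              rwa [dropLast_take (by omega),
                show w.length - j - 1 = w.length - (j+1) by omega] at this
            exact ih.trans hsub
    have := key (w.length - k)
    rwa [show w.length - (w.length - k) = k by omega] at this

lemma diam_nested (hM1 : ∀ w, isPrefixWord Γ w → w ≠ [] → E w ⊆ E w.dropLast)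
    (hbdd : ∀ w, isPrefixWord Γ w → Bornology.IsBounded (E w))
    {w : List (Fin κ)} (hw : isPrefixWord Γ w) (k : ℕ) :
    diam (E w) ≤ diam (E (w.take k)) :=
  diam_mono (nested hM1 hw k) (hbdd _ (pw_take hw k))

/-- Uniform decay of diameters along the construction. -/
lemma decay (hΓc : IsCompact Γ)
    (hM1 : ∀ w, isPrefixWord Γ w → w ≠ [] → E w ⊆ E w.dropLast)
    (hbdd : ∀ w, isPrefixWord Γ w → Bornology.IsBounded (E w))
    (hM2 : ∀ x ∈ Γ, Tendsto (fun n => diam (E (pre x n))) atTop (nhds 0))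
    {ε : ℝ} (hε : 0 < ε) :
    ∃ n₀ : ℕ, ∀ w, isPrefixWord Γ w → n₀ ≤ w.length → diam (E w) < ε := by
  by_contra hcon
  push_neg at hcon
  -- choose for each n a long word with big diameter, and the corresponding point of Γ
  have hch : ∀ n : ℕ, ∃ x ∈ Γ, ∀ k ≤ n, ε ≤ diam (E (pre x k)) := by
    intro n
    obtain ⟨w, hw, hlen, hdiam⟩ := hcon n
    obtain ⟨x, hx, hxw⟩ := hw
    refine ⟨x, hx, fun k hk => ?_⟩
    have h1 : diam (E w) ≤ diam (E (pre x k)) := by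
      have := diam_nested hM1 hbdd (⟨x, hx, hxw⟩ : isPrefixWord Γ w) k
      rw [← hxw, pre_take, min_eq_left (by omega)] at this
      rwa [hxw] at this
    linarith
  choose u hu hud using hch
  obtain ⟨a, ha, φ, hφ, hconv⟩ := hΓc.isSeqCompact (fun n => hu n)
  have key : ∀ k : ℕ, ε ≤ diam (E (pre a k)) := by
    intro k
    -- eventually the subsequence agrees with a on first k coordinates
    have hev : ∀ᶠ m in atTop, pre (u (φ m)) k = pre a k := by
      have : ∀ j : ℕ, ∀ᶠ m in atTop, u (φ m) j = a j := by
        intro j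
        have hj : Tendsto (fun m => u (φ m) j) atTop (nhds (a j)) :=
          (tendsto_pi_nhds.mp hconv) j
        exact hj ((isOpen_discrete {a j}).mem_nhds rfl)
      have hall := (eventually_all_finset (Finset.range k)).mpr (fun j _ => this j)
      filter_upwards [hall] with m hm
      unfold pre
      congr 1
      funext i
      exact hm i (Finset.mem_range.mpr i.2)
    obtain ⟨m, hm⟩ := (hev.and (eventually_ge_atTop k)).exists
    have := hud (φ m) k (le_trans hm.2 (hφ.le_apply))
    rwa [hm.1] at this
  have := (hM2 a ha).eventually (eventually_lt_nhds hε)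
  obtain ⟨k, hk⟩ := this.exists
  exact absurd (key k) (not_le.mpr hk)


lemma ncard_prod {α β : Type*} (A : Set α) (B : Set β) :
    (A ×ˢ B).ncard = A.ncard * B.ncard := by
  rw [← Nat.card_coe_set_eq, ← Nat.card_coe_set_eq, ← Nat.card_coe_set_eq,
    ← Nat.card_prod]
  exact Nat.card_congr (Equiv.Set.prod A B)

/-- The main counting estimate at small scales. -/
lemma count_small (hΓs : shiftMap '' Γ ⊆ Γ)
    (hbdd : ∀ w, isPrefixWord Γ w → Bornology.IsBounded (E w))
    (hM1 : ∀ w, isPrefixWord Γ w → w ≠ [] → E w ⊆ E w.dropLast)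
    {D : ℝ} (hD : 1 ≤ D)
    (hM3 : ∀ v w : List (Fin κ), isPrefixWord Γ (v ++ w) →
      diam (E (v ++ w)) ≤ D * diam (E v) * diam (E w))
    {N r : ℝ} (hN : 1 ≤ N) (hr : 0 < r) (x : X)
    (hNr : N * r < diam (E ([] : List (Fin κ))))
    {n₀ : ℕ} (hn₀ : ∀ w, isPrefixWord Γ w → n₀ ≤ w.length → diam (E w) < 1/(D*N))
    (hfin : (GammaXR Γ E x (N*r)).Finite) :
    {w ∈ GammaR Γ E r | (E w ∩ ball x (N*r)).Nonempty}.Finite ∧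
    {w ∈ GammaR Γ E r | (E w ∩ ball x (N*r)).Nonempty}.ncard ≤
      (GammaXR Γ E x (N*r)).ncard * {u : List (Fin κ) | u.length ≤ n₀}.ncard := by
  classical
  have hD0 : (0:ℝ) < D := lt_of_lt_of_le one_pos hD
  have hN0 : (0:ℝ) < N := lt_of_lt_of_le one_pos hN
  set S := {w ∈ GammaR Γ E r | (E w ∩ ball x (N*r)).Nonempty} with hSdef
  set kk : List (Fin κ) → ℕ :=
    fun w => sInf {k | 1 ≤ k ∧ diam (E (w.take k)) ≤ N * r} with hkk
  set f : List (Fin κ) → List (Fin κ) × List (Fin κ) :=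
    fun w => (w.take (kk w), w.drop (kk w)) with hf
  have hmaps : ∀ w ∈ S, f w ∈ (GammaXR Γ E x (N*r)) ×ˢ {u : List (Fin κ) | u.length ≤ n₀} := by
    rintro w ⟨⟨hwpw, hwne, hwd, hwdl⟩, hwint⟩
    have hlen1 : 1 ≤ w.length := List.length_pos_iff.mpr hwne
    have hKne : w.length ∈ {k | 1 ≤ k ∧ diam (E (w.take k)) ≤ N * r} := by
      refine ⟨hlen1, ?_⟩
      rw [List.take_length]
      calc diam (E w) ≤ r := hwd
        _ ≤ N * r := le_mul_of_one_le_left hr.le hN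
    have hk := Nat.sInf_mem (⟨w.length, hKne⟩ :
      {k | 1 ≤ k ∧ diam (E (w.take k)) ≤ N * r}.Nonempty)
    have hkle : kk w ≤ w.length := Nat.sInf_le hKne
    have hk1 : 1 ≤ kk w := hk.1
    have hkd : diam (E (w.take (kk w))) ≤ N * r := hk.2
    constructor
    · -- first coordinate in Γ(x, Nr)
      refine ⟨⟨pw_take hwpw _, ?_, hkd, ?_⟩, ?_⟩
      · apply List.ne_nil_of_length_pos
        rw [List.length_take]
        omega
      · rw [dropLast_take hkle]
        rcases Nat.lt_or_ge (kk w) 2 with h2 | h2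
        · have : kk w - 1 = 0 := by omega
          rw [this, List.take_zero]
          exact hNr
        · have hlt : kk w - 1 < kk w := by omega
          have hlt' : kk w - 1 < sInf {k | 1 ≤ k ∧ diam (E (w.take k)) ≤ N * r} := hlt
          have := Nat.notMem_of_lt_sInf hlt'
          simp only [Set.mem_setOf_eq, not_and, not_le] at this
          exact this (by omega)
      · obtain ⟨z, hz1, hz2⟩ := hwint
        exact ⟨z, nested hM1 hwpw (kk w) hz1, hz2⟩
    · -- second coordinate short
      simp only [Set.mem_setOf_eq, hf, List.length_drop]
      rcases Nat.lt_or_ge (kk w) w.length with hklt | hkge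
      swap
      · omega
      -- w.dropLast = w.take (kk w) ++ u'
      set u' := w.dropLast.drop (kk w) with hu'
      have htk : w.dropLast.take (kk w) = w.take (kk w) := by
        rw [List.dropLast_eq_take, List.take_take]
        congr 1
        omega
      have hsplit : w.dropLast = w.take (kk w) ++ u' := by
        rw [← htk, List.take_append_drop]
      have hpwdl : isPrefixWord Γ w.dropLast := by
        rw [List.dropLast_eq_take]; exact pw_take hwpw _
      have hu'pw : isPrefixWord Γ u' := pw_drop hΓs hpwdl _
      have hM3' : diam (E w.dropLast) ≤ D * diam (E (w.take (kk w))) * diam (E u') := by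
        nth_rewrite 1 [hsplit]
        exact hM3 _ _ (hsplit ▸ hpwdl)
      have hch : r < D * (N * r) * diam (E u') := by
        have h1 : D * diam (E (w.take (kk w))) * diam (E u') ≤
            D * (N * r) * diam (E u') := by
          apply mul_le_mul_of_nonneg_right _ diam_nonneg
          exact mul_le_mul_of_nonneg_left hkd hD0.le
        linarith
      have hdu' : ¬ diam (E u') < 1/(D*N) := by
        intro h
        have hpos' : (0:ℝ) < D * (N * r) := by positivity
        have := mul_lt_mul_of_pos_left h hpos'
        have heq : D * (N * r) * (1/(D*N)) = r := by
          field_simp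
        rw [heq] at this
        linarith
      have hlen' : u'.length < n₀ := by
        by_contra h
        exact hdu' (hn₀ u' hu'pw (le_of_not_gt h))
      have : u'.length = w.length - 1 - kk w := by
        simp [hu', List.length_drop, List.length_dropLast]
      omega
  have hinj : Set.InjOn f S := by
    intro a _ b _ hab
    have ha : a = (f a).1 ++ (f a).2 := (List.take_append_drop _ _).symm
    have hb : b = (f b).1 ++ (f b).2 := (List.take_append_drop _ _).symm
    rw [ha, hb, hab]
  have htfin : ((GammaXR Γ E x (N*r)) ×ˢ {u : List (Fin κ) | u.length ≤ n₀}).Finite :=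
    hfin.prod (List.finite_length_le _ n₀)
  refine ⟨Set.Finite.of_finite_image (htfin.subset (Set.image_subset_iff.mpr hmaps)) hinj, ?_⟩
  have := Set.ncard_le_ncard_of_injOn f hmaps hinj htfin
  rwa [ncard_prod] at this

/-- At large scales all relevant words are short. -/
lemma count_large
    (hbdd : ∀ w, isPrefixWord Γ w → Bornology.IsBounded (E w))
    (hM1 : ∀ w, isPrefixWord Γ w → w ≠ [] → E w ⊆ E w.dropLast)
    {N r : ℝ} (hN : 1 ≤ N) (hr : 0 < r) (x : X)
    (hNr : diam (E ([] : List (Fin κ))) ≤ N * r)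
    {n₁ : ℕ} (hn₁ : ∀ w, isPrefixWord Γ w → n₁ ≤ w.length →
      diam (E w) < diam (E ([] : List (Fin κ))) / N) :
    {w ∈ GammaR Γ E r | (E w ∩ ball x (N*r)).Nonempty}.Finite ∧
    {w ∈ GammaR Γ E r | (E w ∩ ball x (N*r)).Nonempty}.ncard ≤
      {u : List (Fin κ) | u.length ≤ n₁}.ncard := by
  have hN0 : (0:ℝ) < N := lt_of_lt_of_le one_pos hN
  have hsub : {w ∈ GammaR Γ E r | (E w ∩ ball x (N*r)).Nonempty} ⊆
      {u : List (Fin κ) | u.length ≤ n₁} := by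
    rintro w ⟨⟨hwpw, hwne, hwd, hwdl⟩, -⟩
    have hrlow : diam (E ([] : List (Fin κ))) / N ≤ r := by
      rw [div_le_iff₀ hN0]
      linarith [hNr, mul_comm N r]
    have hpwdl : isPrefixWord Γ w.dropLast := by
      rw [List.dropLast_eq_take]; exact pw_take hwpw _
    have hlen' : w.dropLast.length < n₁ := by
      by_contra h
      have := hn₁ _ hpwdl (le_of_not_gt h)
      linarith
    have hl1 : 1 ≤ w.length := List.length_pos_iff.mpr hwne
    simp only [Set.mem_setOf_eq]
    rw [List.length_dropLast] at hlen'
    omega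
  exact ⟨(List.finite_length_le _ n₁).subset hsub,
    Set.ncard_le_ncard hsub (List.finite_length_le _ n₁)⟩

end MoranAux



/-- for a Moran construction with (M3) and the finite clustering
property, for every `N ≥ 1` there is `C` so that near every point of the limit set,
at most `C` of the sets `E_i`, `i ∈ Γ(r)`, meet `B(x, Nr)` for all small `r`;
under the uniform finite clustering property this holds for all `r > 0` and the
limit set is doubling. -/
theorem fcp_bounded_clusters {X : Type*} [MetricSpace X] [CompleteSpace X]
    {κ : ℕ} (hκ : 2 ≤ κ) (Γ : Set (ℕ → Fin κ)) (hΓc : IsCompact Γ)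
    (hΓs : shiftMap '' Γ ⊆ Γ) (E : List (Fin κ) → Set X)
    (hclosed : ∀ w, isPrefixWord Γ w → IsClosed (E w))
    (hbdd : ∀ w, isPrefixWord Γ w → Bornology.IsBounded (E w))
    (hpos : ∀ w, isPrefixWord Γ w → 0 < diam (E w))
    (hM1 : ∀ w, isPrefixWord Γ w → w ≠ [] → E w ⊆ E w.dropLast)
    (hM2 : ∀ x ∈ Γ, Tendsto (fun n => diam (E (pre x n))) atTop (nhds 0))
    (D : ℝ) (hD : 1 ≤ D)
    (hM3 : ∀ v w : List (Fin κ), isPrefixWord Γ (v ++ w) →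
      diam (E (v ++ w)) ≤ D * diam (E v) * diam (E w))
    (π : (ℕ → Fin κ) → X) (hπ : ∀ x ∈ Γ, ∀ n : ℕ, π x ∈ E (pre x n))
    (hfcp : ∃ M : ℕ, ∀ x ∈ π '' Γ, ∃ ρ > 0, ∀ r : ℝ, 0 < r → r < ρ →
      (GammaXR Γ E x r).Finite ∧ (GammaXR Γ E x r).ncard ≤ M) :
    (∀ N : ℝ, 1 ≤ N → ∃ C : ℕ, 1 ≤ C ∧ ∀ x ∈ π '' Γ, ∃ ρ > 0, ∀ r : ℝ, 0 < r → r < ρ →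
        {w ∈ GammaR Γ E r | (E w ∩ ball x (N * r)).Nonempty}.Finite ∧
        {w ∈ GammaR Γ E r | (E w ∩ ball x (N * r)).Nonempty}.ncard ≤ C) ∧
      ((∃ M : ℕ, ∀ x ∈ π '' Γ, ∀ r : ℝ, 0 < r →
          (GammaXR Γ E x r).Finite ∧ (GammaXR Γ E x r).ncard ≤ M) →
        (∀ N : ℝ, 1 ≤ N → ∃ C : ℕ, 1 ≤ C ∧ ∀ x ∈ π '' Γ, ∀ r : ℝ, 0 < r →
            {w ∈ GammaR Γ E r | (E w ∩ ball x (N * r)).Nonempty}.Finite ∧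
            {w ∈ GammaR Γ E r | (E w ∩ ball x (N * r)).Nonempty}.ncard ≤ C) ∧
          (∃ Nd : ℕ, ∀ x ∈ π '' Γ, ∀ r : ℝ, 0 < r → ∃ F : Finset X, ↑F ⊆ π '' Γ ∧
            F.card ≤ Nd ∧ (π '' Γ) ∩ ball x (2 * r) ⊆ ⋃ y ∈ F, ball y r)) := by
  classical
  have hD0 : (0:ℝ) < D := lt_of_lt_of_le one_pos hD
  constructor
  · -- local version
    intro N hN
    obtain ⟨M, hfcpM⟩ := hfcp
    have hN0 : (0:ℝ) < N := lt_of_lt_of_le one_pos hN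
    have hε : (0:ℝ) < 1/(D*N) := by positivity
    obtain ⟨n₀, hn₀⟩ := MoranAux.decay hΓc hM1 hbdd hM2 hε
    refine ⟨M * {u : List (Fin κ) | u.length ≤ n₀}.ncard + 1, Nat.le_add_left 1 _, ?_⟩
    intro x hx
    obtain ⟨ρ, hρ0, hρ⟩ := hfcpM x hx
    obtain ⟨y, hy, hyx⟩ := hx
    have hnil : isPrefixWord Γ ([] : List (Fin κ)) := ⟨y, hy, by simp⟩
    have h0 : 0 < diam (E ([] : List (Fin κ))) := hpos [] hnil
    refine ⟨min (ρ/N) (diam (E ([] : List (Fin κ)))/N), by positivity, ?_⟩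
    intro r hr hrm
    have h1 : N * r < ρ := by
      have := lt_of_lt_of_le hrm (min_le_left _ _)
      rw [lt_div_iff₀ hN0] at this
      linarith [mul_comm r N]
    have h2 : N * r < diam (E ([] : List (Fin κ))) := by
      have := lt_of_lt_of_le hrm (min_le_right _ _)
      rw [lt_div_iff₀ hN0] at this
      linarith [mul_comm r N]
    have hNr0 : 0 < N * r := by positivity
    obtain ⟨hfin, hcard⟩ := hρ (N*r) hNr0 h1
    obtain ⟨hSfin, hS⟩ := MoranAux.count_small hΓs hbdd hM1 hD hM3 hN hr x h2 hn₀ hfin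
    refine ⟨hSfin, le_trans hS ?_⟩
    exact le_trans (Nat.mul_le_mul_right _ hcard) (Nat.le_succ _)
  · -- uniform version
    rintro ⟨M, hunif⟩
    have hpart : ∀ N : ℝ, 1 ≤ N → ∃ C : ℕ, 1 ≤ C ∧ ∀ x ∈ π '' Γ, ∀ r : ℝ, 0 < r →
        {w ∈ GammaR Γ E r | (E w ∩ ball x (N * r)).Nonempty}.Finite ∧
        {w ∈ GammaR Γ E r | (E w ∩ ball x (N * r)).Nonempty}.ncard ≤ C := by
      intro N hN
      have hN0 : (0:ℝ) < N := lt_of_lt_of_le one_pos hN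
      have hε : (0:ℝ) < 1/(D*N) := by positivity
      obtain ⟨n₀, hn₀⟩ := MoranAux.decay hΓc hM1 hbdd hM2 hε
      rcases Set.eq_empty_or_nonempty Γ with hΓe | ⟨y, hy⟩
      · refine ⟨1, le_refl 1, ?_⟩
        intro x hx
        rw [hΓe] at hx
        simp at hx
      · have hnil : isPrefixWord Γ ([] : List (Fin κ)) := ⟨y, hy, by simp⟩
        have h0 : 0 < diam (E ([] : List (Fin κ))) := hpos [] hnil
        have hε1 : (0:ℝ) < diam (E ([] : List (Fin κ))) / N := by positivity
        obtain ⟨n₁, hn₁⟩ := MoranAux.decay hΓc hM1 hbdd hM2 hε1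
        refine ⟨M * {u : List (Fin κ) | u.length ≤ n₀}.ncard +
          {u : List (Fin κ) | u.length ≤ n₁}.ncard + 1, Nat.le_add_left 1 _, ?_⟩
        intro x hx r hr
        rcases lt_or_ge (N*r) (diam (E ([] : List (Fin κ)))) with hc | hc
        · obtain ⟨hfin, hcard⟩ := hunif x hx (N*r) (by positivity)
          obtain ⟨hSfin, hS⟩ := MoranAux.count_small hΓs hbdd hM1 hD hM3 hN hr x hc hn₀ hfin
          refine ⟨hSfin, le_trans hS ?_⟩
          have := Nat.mul_le_mul_right {u : List (Fin κ) | u.length ≤ n₀}.ncard hcard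
          linarith
        · obtain ⟨hSfin, hS⟩ := MoranAux.count_large hbdd hM1 hN hr x hc hn₁
          refine ⟨hSfin, le_trans hS ?_⟩
          exact le_trans (Nat.le_add_left _ _) (Nat.le_succ _)
    refine ⟨hpart, ?_⟩
    obtain ⟨C, hC1, hC⟩ := hpart 4 (by norm_num)
    refine ⟨C, ?_⟩
    intro x hx r hr
    obtain ⟨y, hy, hyx⟩ := hx
    have hnil : isPrefixWord Γ ([] : List (Fin κ)) := ⟨y, hy, by simp⟩
    rcases le_or_gt (diam (E ([] : List (Fin κ)))) (r/2) with hcase | hcase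
    · -- the whole limit set is small
      refine ⟨{x}, ?_, ?_, ?_⟩
      · intro p hp
        simp only [Finset.coe_singleton, Set.mem_singleton_iff] at hp
        exact hp ▸ ⟨y, hy, hyx⟩
      · simpa using hC1
      · rintro z ⟨⟨y', hy', rfl⟩, hz2⟩
        have hz : π y' ∈ E ([] : List (Fin κ)) := by simpa using hπ y' hy' 0
        have hxE : x ∈ E ([] : List (Fin κ)) := by
          rw [← hyx]; simpa using hπ y hy 0
        refine Set.mem_iUnion₂.mpr ⟨x, Finset.mem_singleton_self x, ?_⟩
        rw [mem_ball]
        have := dist_le_diam_of_mem (hbdd [] hnil) hz hxE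
        linarith
    · -- cover by pieces at scale r/2
      have hs : 0 < r/2 := by linarith
      obtain ⟨hTfin, hTcard⟩ := hC x ⟨y, hy, hyx⟩ (r/2) hs
      set T := {w ∈ GammaR Γ E (r/2) | (E w ∩ ball x (4*(r/2))).Nonempty} with hT
      set g : List (Fin κ) → X :=
        fun w => if h : ∃ x' ∈ Γ, pre x' w.length = w then π h.choose else x with hg
      refine ⟨hTfin.toFinset.image g, ?_, ?_, ?_⟩
      · intro p hp
        simp only [Finset.coe_image, Set.mem_image, Set.Finite.mem_toFinset] at hp
        obtain ⟨w, hw, rfl⟩ := hp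
        have hwT : w ∈ T := (Set.Finite.mem_toFinset hTfin).mp hw
        have hpw : ∃ x' ∈ Γ, pre x' w.length = w := hwT.1.1
        rw [hg]
        simp only [dif_pos hpw]
        exact ⟨hpw.choose, hpw.choose_spec.1, rfl⟩
      · refine le_trans Finset.card_image_le ?_
        rw [← Set.ncard_eq_toFinset_card T hTfin]
        exact hTcard
      · rintro z ⟨⟨y', hy', rfl⟩, hzball⟩
        -- find the word of generation `r/2` containing `π y'`
        have hev : ∃ n : ℕ, 1 ≤ n ∧ diam (E (pre y' n)) ≤ r/2 := by
          obtain ⟨n, hn1, hn2⟩ :=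
            ((eventually_ge_atTop 1).and ((hM2 y' hy').eventually (eventually_lt_nhds hs))).exists
          exact ⟨n, hn1, hn2.le⟩
        obtain ⟨n, hn1, hn2⟩ := hev
        have hm := Nat.sInf_mem (⟨n, hn1, hn2⟩ :
          {m | 1 ≤ m ∧ diam (E (pre y' m)) ≤ r/2}.Nonempty)
        set m := sInf {m | 1 ≤ m ∧ diam (E (pre y' m)) ≤ r/2} with hmdef
        have hwpw : isPrefixWord Γ (pre y' m) := ⟨y', hy', by simp⟩
        have hwT : pre y' m ∈ T := by
          refine ⟨⟨hwpw, ?_, hm.2, ?_⟩, ⟨π y', hπ y' hy' m, ?_⟩⟩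
          · apply List.ne_nil_of_length_pos
            rw [MoranAux.pre_length]
            exact hm.1
          · have hdl : (pre y' m).dropLast = pre y' (m-1) := by
              rw [List.dropLast_eq_take, MoranAux.pre_length, MoranAux.pre_take]
              congr 1
              omega
            rw [hdl]
            rcases Nat.lt_or_ge m 2 with h2 | h2
            · have : m - 1 = 0 := by omega
              rw [this, MoranAux.pre_zero]
              exact hcase
            · have hlt : m - 1 < sInf {m | 1 ≤ m ∧ diam (E (pre y' m)) ≤ r/2} := by
                rw [← hmdef]; omega
              have := Nat.notMem_of_lt_sInf hlt
              simp only [Set.mem_setOf_eq, not_and, not_le] at this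
              exact this (by omega)
          · rwa [show (4:ℝ)*(r/2) = 2*r by ring]
        refine Set.mem_iUnion₂.mpr ⟨g (pre y' m), ?_, ?_⟩
        · exact Finset.mem_image.mpr ⟨pre y' m, (Set.Finite.mem_toFinset hTfin).mpr hwT, rfl⟩
        · have hpw' : ∃ x' ∈ Γ, pre x' (pre y' m).length = pre y' m := hwpw
          have hgE : g (pre y' m) ∈ E (pre y' m) := by
            rw [hg]
            simp only [dif_pos hpw']
            have := hπ hpw'.choose hpw'.choose_spec.1 (pre y' m).length
            rwa [hpw'.choose_spec.2] at this
          rw [mem_ball]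
          have := dist_le_diam_of_mem (hbdd _ hwpw) (hπ y' hy' m) hgE
          linarith [hm.2]
end

section
/- Let {E_i : i ∈ Γ_*} be a Moran construction on a complete metric space satisfying (M3) and the uniform finite clustering property over points of the limit set E. Then the supremum of #Γ(x,r) extends uniformly over all points of the space: sup_{x ∈ X} sup_{r>0} #Γ(x,r) < ∞. -/
open Metric Filter Set

section Helpers

variable {κ : ℕ}

lemma pre_length (x : ℕ → Fin κ) (n : ℕ) : (pre x n).length = n := by simp [pre]

lemma pre_getElem (x : ℕ → Fin κ) {n i : ℕ} (h : i < (pre x n).length) :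
    (pre x n)[i] = x i := by simp [pre]

lemma pre_take (x : ℕ → Fin κ) {m n : ℕ} (h : m ≤ n) : (pre x n).take m = pre x m := by
  apply List.ext_getElem
  · simp [pre_length]; omega
  · intro i h1 h2
    simp [pre, List.getElem_take]

lemma pre_dropLast (x : ℕ → Fin κ) (n : ℕ) : (pre x n).dropLast = pre x (n - 1) := by
  rw [List.dropLast_eq_take, pre_length, pre_take x (Nat.sub_le _ _)]

lemma shiftIter_apply (k : ℕ) (x : ℕ → Fin κ) (n : ℕ) : (shiftMap^[k] x) n = x (n + k) := by
  induction k generalizing x with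
  | zero => rfl
  | succ k ih =>
    rw [Function.iterate_succ_apply, ih]
    simp [shiftMap]; ring_nf

lemma shiftIter_mem {Γ : Set (ℕ → Fin κ)} (hΓs : shiftMap '' Γ ⊆ Γ) {x : ℕ → Fin κ}
    (hx : x ∈ Γ) (k : ℕ) : shiftMap^[k] x ∈ Γ := by
  induction k with
  | zero => exact hx
  | succ k ih => rw [Function.iterate_succ_apply']; exact hΓs ⟨_, ih, rfl⟩

lemma pre_append (x : ℕ → Fin κ) (a b : ℕ) :
    pre x (a + b) = pre x a ++ pre (shiftMap^[a] x) b := by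
  apply List.ext_getElem
  · simp [pre_length]
  · intro i h1 h2
    rw [pre_getElem]
    rcases lt_or_ge i a with h | h
    · rw [List.getElem_append_left (by rwa [pre_length]), pre_getElem]
    · rw [List.getElem_append_right (by rwa [pre_length])]
      simp only [pre_length, pre_getElem, shiftIter_apply]
      congr 1; omega

lemma isPrefixWord_pre {Γ : Set (ℕ → Fin κ)} {z : ℕ → Fin κ} (hz : z ∈ Γ) (n : ℕ) :
    isPrefixWord Γ (pre z n) := ⟨z, hz, by rw [pre_length]⟩

lemma E_anti {X : Type*} [MetricSpace X] {Γ : Set (ℕ → Fin κ)} {E : List (Fin κ) → Set X}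
    (hM1 : ∀ w, isPrefixWord Γ w → w ≠ [] → E w ⊆ E w.dropLast)
    {z : ℕ → Fin κ} (hz : z ∈ Γ) {a b : ℕ} (h : a ≤ b) : E (pre z b) ⊆ E (pre z a) := by
  induction h with
  | refl => exact subset_rfl
  | @step b hab ih =>
    refine subset_trans ?_ ih
    have := hM1 (pre z (b + 1)) (isPrefixWord_pre hz _) (by simp [pre])
    rwa [pre_dropLast, Nat.add_sub_cancel] at this

lemma uniform_N {X : Type*} [MetricSpace X] {Γ : Set (ℕ → Fin κ)} (hΓc : IsCompact Γ)
    {E : List (Fin κ) → Set X}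
    (hbdd : ∀ w, isPrefixWord Γ w → Bornology.IsBounded (E w))
    (hM1 : ∀ w, isPrefixWord Γ w → w ≠ [] → E w ⊆ E w.dropLast)
    (hM2 : ∀ x ∈ Γ, Tendsto (fun n => diam (E (pre x n))) atTop (nhds 0))
    {c : ℝ} (hc : 0 < c) : ∃ N : ℕ, ∀ z ∈ Γ, diam (E (pre z N)) ≤ c := by
  have hex : ∀ z : {w // w ∈ Γ}, ∃ n, diam (E (pre z.1 n)) < c := fun z =>
    ((hM2 z.1 z.2).eventually_lt_const hc).exists
  choose n hn using hex
  set U : {w // w ∈ Γ} → Set (ℕ → Fin κ) := fun z => {y | ∀ k < n z, y k = z.1 k} with hU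
  have hopen : ∀ z, IsOpen (U z) := by
    intro z
    have : U z = ⋂ k ∈ Finset.range (n z), (fun y : ℕ → Fin κ => y k) ⁻¹' {z.1 k} := by
      ext y; simp [hU]
    rw [this]
    exact isOpen_biInter_finset fun k _ =>
      (continuous_apply k).isOpen_preimage _ (isOpen_discrete _)
  obtain ⟨t, ht⟩ := hΓc.elim_finite_subcover U hopen
    (fun z hz => Set.mem_iUnion.2 ⟨⟨z, hz⟩, fun k _ => rfl⟩)
  refine ⟨t.sup n, fun z hz => ?_⟩
  obtain ⟨w, hwt, hw⟩ := Set.mem_iUnion₂.1 (ht hz)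
  have hpre : pre z (n w) = pre w.1 (n w) := by
    apply List.ext_getElem (by simp [pre_length])
    intro i h1 h2
    rw [pre_getElem, pre_getElem]
    exact hw i (by rwa [pre_length] at h1)
  calc diam (E (pre z (t.sup n))) ≤ diam (E (pre z (n w))) :=
        diam_mono (E_anti hM1 hz (Finset.le_sup hwt)) (hbdd _ (isPrefixWord_pre hz _))
    _ ≤ c := by rw [hpre]; exact (hn w).le

end Helpers

/-- for a Moran construction with (M3) and the uniform finite
clustering property over points of the limit set `E = π(Γ)`, the bound on
`#Γ(x,r)` extends uniformly over all points of the space. -/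
theorem ufcp_over_all_points {X : Type*} [MetricSpace X] [CompleteSpace X]
    {κ : ℕ} (hκ : 2 ≤ κ) (Γ : Set (ℕ → Fin κ)) (hΓc : IsCompact Γ)
    (hΓs : shiftMap '' Γ ⊆ Γ) (E : List (Fin κ) → Set X)
    (hclosed : ∀ w, isPrefixWord Γ w → IsClosed (E w))
    (hbdd : ∀ w, isPrefixWord Γ w → Bornology.IsBounded (E w))
    (hpos : ∀ w, isPrefixWord Γ w → 0 < diam (E w))
    (hM1 : ∀ w, isPrefixWord Γ w → w ≠ [] → E w ⊆ E w.dropLast)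
    (hM2 : ∀ x ∈ Γ, Tendsto (fun n => diam (E (pre x n))) atTop (nhds 0))
    (D : ℝ) (hD : 1 ≤ D)
    (hM3 : ∀ v w : List (Fin κ), isPrefixWord Γ (v ++ w) →
      diam (E (v ++ w)) ≤ D * diam (E v) * diam (E w))
    (π : (ℕ → Fin κ) → X) (hπ : ∀ x ∈ Γ, ∀ n : ℕ, π x ∈ E (pre x n))
    (hufcp : ∃ M : ℕ, ∀ x ∈ π '' Γ, ∀ r : ℝ, 0 < r →
      (GammaXR Γ E x r).Finite ∧ (GammaXR Γ E x r).ncard ≤ M) :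
    ∃ M : ℕ, ∀ x : X, ∀ r : ℝ, 0 < r →
      (GammaXR Γ E x r).Finite ∧ (GammaXR Γ E x r).ncard ≤ M := by
  classical
  obtain ⟨M0, hM0⟩ := hufcp
  have hD0 : (0:ℝ) < D := lt_of_lt_of_le one_pos hD
  have hc : (0:ℝ) < 1 / (3 * D) := by positivity
  obtain ⟨N, hN⟩ := uniform_N hΓc hbdd hM1 hM2 hc
  set A : Set (List (Fin κ)) := {l | l.length ≤ N} with hA
  have hAfin : A.Finite := List.finite_length_le (Fin κ) N
  refine ⟨(M0 + κ) * A.ncard, fun x r hr => ?_⟩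
  rcases Set.eq_empty_or_nonempty (GammaXR Γ E x r) with he | ⟨j0, hj0⟩
  · rw [he]; simp
  obtain ⟨⟨hj0G, hj0ne, hj0d, hj0d'⟩, q0, hq0E, hq0B⟩ := hj0
  set y := π (Classical.choose hj0G) with hy
  have hz0 := Classical.choose_spec hj0G
  have hyE : y ∈ E j0 := by
    have := hπ _ hz0.1 j0.length
    rwa [hz0.2] at this
  have h3r : (0:ℝ) < 3 * r := by linarith
  obtain ⟨hSfin, hScard⟩ := hM0 y ⟨_, hz0.1, rfl⟩ (3*r) h3r
  set S := GammaXR Γ E y (3*r) with hSdef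
  set T : Set (List (Fin κ)) := S ∪ (fun a : Fin κ => [a]) '' Set.univ with hT
  have hTfin : T.Finite := hSfin.union (Set.finite_univ.image _)
  have hTcard : T.ncard ≤ M0 + κ := by
    refine le_trans (Set.ncard_union_le _ _) (add_le_add hScard ?_)
    refine le_trans (Set.ncard_image_le Set.finite_univ) ?_
    simp [Set.ncard_univ]
  -- the existence of a truncation level, for members of Γ(x,r)
  have hex : ∀ j ∈ GammaXR Γ E x r, ∃ kk, diam (E (j.take (kk+1))) ≤ 3*r := by
    rintro j ⟨⟨hjG, hjne, hjd, _⟩, _⟩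
    have hL : 1 ≤ j.length := List.length_pos_iff.2 hjne
    refine ⟨j.length - 1, ?_⟩
    rw [Nat.sub_add_cancel hL, List.take_length]
    linarith
  set f : List (Fin κ) → List (Fin κ) × List (Fin κ) := fun j =>
    if h : ∃ kk, diam (E (j.take (kk+1))) ≤ 3*r then
      (j.take (Nat.find h + 1), j.drop (Nat.find h + 1)) else ([], []) with hf
  have hrecon : ∀ j ∈ GammaXR Γ E x r, (f j).1 ++ (f j).2 = j := by
    intro j hj
    simp only [hf, dif_pos (hex j hj)]
    exact List.take_append_drop _ _
  have hinj : Set.InjOn f (GammaXR Γ E x r) := by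
    intro a ha b hb hab
    rw [← hrecon a ha, ← hrecon b hb, hab]
  have key : ∀ j ∈ GammaXR Γ E x r, f j ∈ T ×ˢ A := by
    intro j hj
    obtain ⟨⟨hjG, hjne, hjd, hjd'⟩, q, hqE, hqB⟩ := hj
    obtain ⟨z, hz, hzpre⟩ := hjG
    set L := j.length with hL
    have hL1 : 1 ≤ L := List.length_pos_iff.2 hjne
    have hEx := hex j ⟨⟨⟨z, hz, hzpre⟩, hjne, hjd, hjd'⟩, q, hqE, hqB⟩
    set k := Nat.find hEx + 1 with hk
    have hfj : f j = (j.take k, j.drop k) := by simp only [hf, dif_pos hEx]; rfl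
    have hfind : Nat.find hEx ≤ L - 1 := by
      apply Nat.find_le
      rw [Nat.sub_add_cancel hL1, hL, List.take_length]
      linarith
    have hkL : k ≤ L := by omega
    have htake : ∀ m, m ≤ L → j.take m = pre z m := by
      intro m hm
      conv_lhs => rw [← hzpre]
      exact pre_take z hm
    have hdu : diam (E (j.take k)) ≤ 3*r := Nat.find_spec hEx
    have hqEu : q ∈ E (j.take k) := by
      rw [htake k hkL]
      have hq' : q ∈ E (pre z L) := by rw [← hzpre] at hqE; exact hqE
      exact E_anti hM1 hz hkL hq'
    rw [hfj, Set.mem_prod]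
    constructor
    · -- first component in T
      rcases Nat.eq_zero_or_pos (Nat.find hEx) with h0 | hpos0
      · -- length-one word
        apply Set.mem_union_right
        refine ⟨z 0, Set.mem_univ _, ?_⟩
        rw [htake k hkL]
        have : k = 1 := by omega
        rw [this]
        simp [pre, List.ofFn_succ]
      · -- belongs to Γ(y, 3r)
        apply Set.mem_union_left
        have hqball : q ∈ ball y (3*r) := by
          have h1 : dist q x < r := mem_ball.1 hqB
          have h2 : dist x q0 < r := by
            rw [dist_comm]; exact mem_ball.1 hq0B
          have h3 : dist q0 y ≤ r := by
            refine le_trans (dist_le_diam_of_mem (hbdd j0 hj0G) hq0E hyE) hj0d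
          have := dist_triangle4 q x q0 y
          rw [mem_ball]
          linarith
        have hddrop : 3*r < diam (E ((List.take k j).dropLast)) := by
          have hmin := Nat.find_min hEx (show Nat.find hEx - 1 < Nat.find hEx by omega)
          have hidx : Nat.find hEx - 1 + 1 = k - 1 := by omega
          rw [hidx] at hmin
          push_neg at hmin
          rw [htake k hkL, pre_dropLast, ← htake (k-1) (by omega)]
          exact hmin
        refine ⟨⟨⟨z, hz, ?_⟩, ?_, hdu, hddrop⟩, q, hqEu, hqball⟩
        · rw [htake k hkL, pre_length]
        · rw [htake k hkL]
          exact List.ne_nil_of_length_pos (by rw [pre_length]; omega)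
    · -- second component in A
      show (j.drop k).length ≤ N
      rw [List.length_drop]
      rcases eq_or_lt_of_le hkL with heq | hlt
      · omega
      -- k < L : use M3 to bound the tail
      set m := L - 1 - k with hm
      have hkm : k + m = L - 1 := by omega
      set z' := shiftMap^[k] z with hz'
      have hz'mem : z' ∈ Γ := shiftIter_mem hΓs hz k
      have hsplit : pre z (L-1) = pre z k ++ pre z' m := by
        rw [← hkm, pre_append]
      have hdropj : j.dropLast = pre z (L-1) := by
        conv_lhs => rw [← hzpre]
        rw [pre_dropLast]
      have hr3 : r < D * diam (E (pre z k)) * diam (E (pre z' m)) := by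
        have h1 : r < diam (E (pre z k ++ pre z' m)) := by
          rw [← hsplit, ← hdropj]; exact hjd'
        have h2 := hM3 (pre z k) (pre z' m) (by rw [← hsplit]; exact isPrefixWord_pre hz _)
        linarith
      have hdzk : diam (E (pre z k)) ≤ 3*r := by rw [← htake k hkL]; exact hdu
      have hd'nonneg : 0 ≤ diam (E (pre z' m)) := diam_nonneg
      have hgt : 1 / (3*D) < diam (E (pre z' m)) := by
        have h4 : r < D * (3*r) * diam (E (pre z' m)) := by
          refine lt_of_lt_of_le hr3 ?_
          nlinarith [mul_nonneg (mul_nonneg (sub_nonneg.2 hdzk) hD0.le) hd'nonneg]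
        rw [div_lt_iff₀ (by positivity)]
        nlinarith [h4, mul_pos hr hD0]
      have hmN : m < N := by
        by_contra hcon
        push_neg at hcon
        have : diam (E (pre z' m)) ≤ diam (E (pre z' N)) :=
          diam_mono (E_anti hM1 hz'mem hcon) (hbdd _ (isPrefixWord_pre hz'mem _))
        have := hN z' hz'mem
        linarith
      omega
  have hfinTA : (T ×ˢ A).Finite := hTfin.prod hAfin
  have hfin : (GammaXR Γ E x r).Finite := by
    refine Set.Finite.of_finite_image (hfinTA.subset ?_) hinj
    rw [Set.image_subset_iff]
    exact fun j hj => key j hj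
  refine ⟨hfin, ?_⟩
  have hprod : (T ×ˢ A).ncard = T.ncard * A.ncard := by
    have hcongr := Nat.card_congr (Equiv.Set.prod T A)
    simpa [Nat.card_coe_set_eq, Nat.card_prod] using hcongr
  calc (GammaXR Γ E x r).ncard ≤ (T ×ˢ A).ncard :=
        Set.ncard_le_ncard_of_injOn f key hinj hfinTA
    _ = T.ncard * A.ncard := hprod
    _ ≤ (M0 + κ) * A.ncard := Nat.mul_le_mul_right _ hTcard
end

section
/- Let Q = [0,1]² and let {φ_i}_{i=1}^κ be affine maps φ_i(x,y) = (r_i x, s_i y) + (a_i, b_i) mapping Q into Q, with r_i, s_i, a_i, b_i > 0. If the open intervals (a_i, a_i + r_i) are pairwise disjoint and the open intervals (b_i, b_i + s_i) are pairwise disjoint, then the iterated function system {φ_i} satisfies the uniform finite clustering property; in fact #Γ(x,r) ≤ 4M + 2 for all x ∈ Q and r > 0, where M is any integer with √2 < M·min{r_i, s_i : 1 ≤ i ≤ κ}. -/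
open Metric Set

/-- For a word `i = i₁⋯iₙ`, the composition `φ_i = φ_{i₁} ∘ ⋯ ∘ φ_{iₙ}`. -/
def wordMap {κ : ℕ} {X : Type*} (φ : Fin κ → X → X) (w : List (Fin κ)) : X → X :=
  w.foldr (fun i f => φ i ∘ f) id

/-- The unit square `Q = [0,1] × [0,1]` in the Euclidean plane. -/
def unitSq : Set (EuclideanSpace ℝ (Fin 2)) :=
  {p | p 0 ∈ Icc (0:ℝ) 1 ∧ p 1 ∈ Icc (0:ℝ) 1}

/-- `Γ(x,r)` for the Moran construction `{φ_i(Q) : i ∈ Σ_*}`: words `i` with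
`diam φ_i(Q) ≤ r < diam φ_{i⁻}(Q)` and `φ_i(Q) ∩ B(x,r) ≠ ∅`. -/
def affGammaXR {κ : ℕ} (φ : Fin κ → EuclideanSpace ℝ (Fin 2) → EuclideanSpace ℝ (Fin 2))
    (x : EuclideanSpace ℝ (Fin 2)) (r : ℝ) : Set (List (Fin κ)) :=
  {w | w ≠ [] ∧ diam (wordMap φ w '' unitSq) ≤ r ∧
    r < diam (wordMap φ w.dropLast '' unitSq) ∧
    ((wordMap φ w '' unitSq) ∩ ball x r).Nonempty}

namespace UFCPaux

variable {κ : ℕ}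

/-- Translation part of the word map (x-coordinate: use `r a`; y: use `s b`). -/
def wA (r a : Fin κ → ℝ) : List (Fin κ) → ℝ
  | [] => 0
  | i :: w => r i * wA r a w + a i

/-- Contraction part of the word map. -/
def wR (r : Fin κ → ℝ) (w : List (Fin κ)) : ℝ := (w.map r).prod

@[simp] lemma wA_nil (r a : Fin κ → ℝ) : wA r a [] = 0 := rfl
@[simp] lemma wA_cons (r a : Fin κ → ℝ) (i : Fin κ) (w : List (Fin κ)) :
    wA r a (i :: w) = r i * wA r a w + a i := rfl
@[simp] lemma wR_nil (r : Fin κ → ℝ) : wR r [] = 1 := rfl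
@[simp] lemma wR_cons (r : Fin κ → ℝ) (i : Fin κ) (w : List (Fin κ)) :
    wR r (i :: w) = r i * wR r w := by simp [wR]

lemma wR_pos {r : Fin κ → ℝ} (hr : ∀ i, 0 < r i) (w : List (Fin κ)) : 0 < wR r w := by
  induction w with
  | nil => norm_num
  | cons i w ih => simpa using mul_pos (hr i) ih

lemma wR_append (r : Fin κ → ℝ) (u v : List (Fin κ)) :
    wR r (u ++ v) = wR r u * wR r v := by
  simp [wR]

lemma wA_append (r a : Fin κ → ℝ) (u v : List (Fin κ)) :
    wA r a (u ++ v) = wA r a u + wR r u * wA r a v := by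
  induction u with
  | nil => simp
  | cons i u ih => simp [ih]; ring

lemma wA_nonneg {r a : Fin κ → ℝ} (hr : ∀ i, 0 < r i) (ha : ∀ i, 0 ≤ a i)
    (w : List (Fin κ)) : 0 ≤ wA r a w := by
  induction w with
  | nil => simp
  | cons i w ih =>
    simp only [wA_cons]
    have := (hr i).le
    nlinarith [ha i]

lemma wA_add_wR_le_one {r a : Fin κ → ℝ} (hr : ∀ i, 0 < r i)
    (h1 : ∀ i, a i + r i ≤ 1) (w : List (Fin κ)) :
    wA r a w + wR r w ≤ 1 := by
  induction w with
  | nil => simp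
  | cons i w ih =>
    simp only [wA_cons, wR_cons]
    have := (hr i).le
    nlinarith [h1 i]

lemma wordMap_append {X : Type*} (φ : Fin κ → X → X) (u v : List (Fin κ)) :
    wordMap φ (u ++ v) = wordMap φ u ∘ wordMap φ v := by
  induction u with
  | nil => rfl
  | cons i u ih =>
    show φ i ∘ wordMap φ (u ++ v) = (φ i ∘ wordMap φ u) ∘ wordMap φ v
    rw [ih]
    rfl

/-- Two lists, neither a prefix of the other, split after a common prefix. -/
lemma exists_split {α : Type*} :
    ∀ (l₁ l₂ : List α), ¬ l₁ <+: l₂ → ¬ l₂ <+: l₁ →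
    ∃ u i j v₁ v₂, i ≠ j ∧ l₁ = u ++ i :: v₁ ∧ l₂ = u ++ j :: v₂ := by
  intro l₁
  induction l₁ with
  | nil => intro l₂ h₁ _; exact absurd (List.nil_prefix) h₁
  | cons i t ih =>
    intro l₂ h₁ h₂
    cases l₂ with
    | nil => exact absurd (List.nil_prefix) h₂
    | cons j t₂ =>
      by_cases hij : i = j
      · subst hij
        rw [List.cons_prefix_cons] at h₁ h₂
        simp only [true_and] at h₁ h₂
        obtain ⟨u, i', j', v₁, v₂, hne, e1, e2⟩ := ih t₂ h₁ h₂
        exact ⟨i :: u, i', j', v₁, v₂, hne, by simp [e1], by simp [e2]⟩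
      · exact ⟨[], i, j, t, t₂, hij, rfl, rfl⟩

/-- The interval of a word starting with letter `i` is nested in the letter's interval. -/
lemma interval_nested {r a : Fin κ → ℝ} (hr : ∀ i, 0 < r i) (ha : ∀ i, 0 ≤ a i)
    (h1 : ∀ i, a i + r i ≤ 1) (i : Fin κ) (v : List (Fin κ)) :
    a i ≤ wA r a (i :: v) ∧ wA r a (i :: v) + wR r (i :: v) ≤ a i + r i := by
  constructor
  · simp only [wA_cons]
    nlinarith [wA_nonneg hr ha v, (hr i).le]
  · simp only [wA_cons, wR_cons]
    nlinarith [wA_add_wR_le_one hr h1 v, (hr i).le]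

/-- Disjointness of the open shadows of two words that split at letters `i ≠ j`. -/
lemma interval_disj {r a : Fin κ → ℝ} (hr : ∀ i, 0 < r i) (ha : ∀ i, 0 ≤ a i)
    (h1 : ∀ i, a i + r i ≤ 1)
    (hd : ∀ i j, i ≠ j → Ioo (a i) (a i + r i) ∩ Ioo (a j) (a j + r j) = ∅)
    (u : List (Fin κ)) (i j : Fin κ) (v₁ v₂ : List (Fin κ)) (hij : i ≠ j) :
    Ioo (wA r a (u ++ i :: v₁)) (wA r a (u ++ i :: v₁) + wR r (u ++ i :: v₁)) ∩
      Ioo (wA r a (u ++ j :: v₂)) (wA r a (u ++ j :: v₂) + wR r (u ++ j :: v₂)) = ∅ := by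
  rw [Set.eq_empty_iff_forall_notMem]
  rintro z ⟨⟨hz1, hz2⟩, ⟨hz3, hz4⟩⟩
  simp only [wA_append, wR_append] at hz1 hz2 hz3 hz4
  have hRu : 0 < wR r u := wR_pos hr u
  set y := (z - wA r a u) / wR r u with hy
  have key : ∀ (k : Fin κ) (v : List (Fin κ)),
      wA r a u + wR r u * wA r a (k :: v) < z →
      z < wA r a u + wR r u * wA r a (k :: v) + wR r u * wR r (k :: v) →
      y ∈ Ioo (a k) (a k + r k) := by
    intro k v hl hu'
    obtain ⟨hn1, hn2⟩ := interval_nested hr ha h1 k v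
    constructor
    · have : wA r a (k :: v) < y := by
        rw [hy, lt_div_iff₀ hRu]; nlinarith
      linarith
    · have : y < wA r a (k :: v) + wR r (k :: v) := by
        rw [hy, div_lt_iff₀ hRu]; nlinarith
      linarith
  have h₁ := key i v₁ hz1 hz2
  have h₂ := key j v₂ hz3 hz4
  have := hd i j hij
  rw [Set.eq_empty_iff_forall_notMem] at this
  exact this y ⟨h₁, h₂⟩

/-- 1-dimensional counting lemma: intervals of length `> ℓ` with pairwise disjoint
interiors each meeting `(u,v)` with `v - u ≤ 2Mℓ` number at most `2M+1`. -/
lemma count1d {ι : Type*} [DecidableEq ι] (M : ℕ) (ℓ u v : ℝ) (hl : 0 < ℓ)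
    (hv : v - u ≤ 2 * M * ℓ) (c d : ι → ℝ) (F : Finset ι)
    (hlen : ∀ i ∈ F, c i + ℓ < d i)
    (hdisj : ∀ i ∈ F, ∀ j ∈ F, i ≠ j → Ioo (c i) (d i) ∩ Ioo (c j) (d j) = ∅)
    (hmeet : ∀ i ∈ F, ∃ z, c i ≤ z ∧ z ≤ d i ∧ u < z ∧ z < v) :
    F.card ≤ 2 * M + 1 := by
  classical
  have hdu : ∀ i ∈ F, u < d i := by
    intro i hi
    obtain ⟨z, _, hz2, hz3, _⟩ := hmeet i hi
    linarith
  have hcv : ∀ i ∈ F, c i < v := by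
    intro i hi
    obtain ⟨z, hz1, _, _, hz4⟩ := hmeet i hi
    linarith
  -- separation of left endpoints
  have hsep : ∀ i ∈ F, ∀ j ∈ F, i ≠ j → c i ≤ c j → c i + ℓ < c j := by
    intro i hi j hj hij hle
    by_contra hcon
    push_neg at hcon
    have h1 : c j < d i := lt_of_le_of_lt hcon (hlen i hi)
    have h2 : c j < d j := by have := hlen j hj; linarith
    set z := (c j + min (d i) (d j)) / 2 with hz
    have hm : c j < min (d i) (d j) := lt_min h1 h2
    have hzi : z ∈ Ioo (c i) (d i) := by
      constructor
      · have : c j < z := by rw [hz]; linarith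
        linarith
      · have : z < min (d i) (d j) := by rw [hz]; linarith
        exact lt_of_lt_of_le this (min_le_left _ _)
    have hzj : z ∈ Ioo (c j) (d j) := by
      constructor
      · rw [hz]; linarith
      · have : z < min (d i) (d j) := by rw [hz]; linarith
        exact lt_of_lt_of_le this (min_le_right _ _)
    have := hdisj i hi j hj hij
    rw [Set.eq_empty_iff_forall_notMem] at this
    exact this z ⟨hzi, hzj⟩
  -- at most one interval has left endpoint ≤ u
  have huniq : ∀ i ∈ F, ∀ j ∈ F, c i ≤ u → c j ≤ u → i = j := by
    intro i hi j hj hci hcj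
    by_contra hij
    set z := (u + min (d i) (d j)) / 2 with hz
    have hm : u < min (d i) (d j) := lt_min (hdu i hi) (hdu j hj)
    have hzu : u < z := by rw [hz]; linarith
    have hzm : z < min (d i) (d j) := by rw [hz]; linarith
    have hzi : z ∈ Ioo (c i) (d i) :=
      ⟨lt_of_le_of_lt hci hzu, lt_of_lt_of_le hzm (min_le_left _ _)⟩
    have hzj : z ∈ Ioo (c j) (d j) :=
      ⟨lt_of_le_of_lt hcj hzu, lt_of_lt_of_le hzm (min_le_right _ _)⟩
    have := hdisj i hi j hj hij
    rw [Set.eq_empty_iff_forall_notMem] at this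
    exact this z ⟨hzi, hzj⟩
  set F' := F.filter (fun i => u < c i) with hF'
  have hsplit : F.card ≤ F'.card + 1 := by
    have h1 : (F \ F').card ≤ 1 := by
      rw [Finset.card_le_one]
      intro i hi j hj
      rw [hF', Finset.mem_sdiff, Finset.mem_filter] at hi hj
      push_neg at hi hj
      exact huniq i hi.1 j hj.1 (hi.2 hi.1) (hj.2 hj.1)
    have h2 : (F \ F').card + F'.card = F.card :=
      Finset.card_sdiff_add_card_eq_card (Finset.filter_subset _ F)
    omega
  have hF'card : F'.card ≤ 2 * M := by
    have hinj : F'.card ≤ (Finset.Ico (0:ℤ) (2*M)).card := by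
      apply Finset.card_le_card_of_injOn (fun i => ⌊(c i - u) / ℓ⌋)
      · intro i hi
        simp only [Finset.mem_coe, hF', Finset.mem_filter] at hi
        rw [Finset.mem_coe, Finset.mem_Ico]
        constructor
        · apply Int.floor_nonneg.2
          apply div_nonneg (by linarith [hi.2]) hl.le
        · rw [Int.floor_lt]
          have := hcv i hi.1
          rw [div_lt_iff₀ hl]
          push_cast
          nlinarith
      · intro i hi j hj hfij
        simp only [Finset.mem_coe, hF', Finset.mem_filter] at hi hj
        by_contra hij
        have key : ∀ p q : ι, p ∈ F → q ∈ F → p ≠ q → c p ≤ c q →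
            ⌊(c p - u) / ℓ⌋ ≠ ⌊(c q - u) / ℓ⌋ := by
          intro p q hp hq hpq hle
          have hsep' := hsep p hp q hq hpq hle
          have hstep : (c p - u) / ℓ + 1 ≤ (c q - u) / ℓ := by
            rw [div_add' _ _ _ (ne_of_gt hl), div_le_div_iff_of_pos_right hl]
            linarith
          intro heq
          have h1 : (⌊(c p - u) / ℓ⌋ : ℝ) ≤ (c p - u) / ℓ := Int.floor_le _
          have h2 : ⌊(c p - u) / ℓ⌋ + 1 ≤ ⌊(c q - u) / ℓ⌋ := by
            apply Int.le_floor.2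
            push_cast
            linarith
          omega
        rcases le_total (c i) (c j) with h | h
        · exact key i j hi.1 hj.1 hij h hfij
        · exact key j i hj.1 hi.1 (Ne.symm hij) h hfij.symm
    have : (Finset.Ico (0:ℤ) (2*M)).card = 2 * M := by
      rw [Int.card_Ico]
      omega
    omega
  omega

end UFCPaux

open UFCPaux

/-- a diagonal self-affine system on the unit square whose
`x`-interval shadows and `y`-interval shadows are pairwise disjoint satisfies the
uniform finite clustering property, with bound `4M + 2` where `√2 < M min(rᵢ,sᵢ)`. -/
theorem diagonal_affine_ufcp {κ : ℕ} (hκ : 2 ≤ κ)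
    (r s a b : Fin κ → ℝ) (hr : ∀ i, 0 < r i) (hs : ∀ i, 0 < s i)
    (ha : ∀ i, 0 < a i) (hb : ∀ i, 0 < b i)
    (φ : Fin κ → EuclideanSpace ℝ (Fin 2) → EuclideanSpace ℝ (Fin 2))
    (hφ : ∀ i p, φ i p 0 = r i * p 0 + a i ∧ φ i p 1 = s i * p 1 + b i)
    (hmaps : ∀ i, φ i '' unitSq ⊆ unitSq)
    (hdisjx : ∀ i j, i ≠ j → Ioo (a i) (a i + r i) ∩ Ioo (a j) (a j + r j) = ∅)
    (hdisjy : ∀ i j, i ≠ j → Ioo (b i) (b i + s i) ∩ Ioo (b j) (b j + s j) = ∅)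
    (M : ℕ) (hM : ∀ i, Real.sqrt 2 < M * min (r i) (s i)) :
    ∀ x ∈ unitSq, ∀ t : ℝ, 0 < t →
      (affGammaXR φ x t).Finite ∧ (affGammaXR φ x t).ncard ≤ 4 * M + 2 := by
  classical
  -- distance formula in the plane
  have dist_coord : ∀ p q : EuclideanSpace ℝ (Fin 2),
      dist p q = Real.sqrt ((p 0 - q 0)^2 + (p 1 - q 1)^2) := by
    intro p q
    rw [EuclideanSpace.dist_eq]
    rw [Fin.sum_univ_two]
    simp [Real.dist_eq, sq_abs]
  -- word maps act coordinatewise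
  have hcoord : ∀ (w : List (Fin κ)) (p : EuclideanSpace ℝ (Fin 2)),
      wordMap φ w p 0 = wR r w * p 0 + wA r a w ∧
      wordMap φ w p 1 = wR s w * p 1 + wA s b w := by
    intro w
    induction w with
    | nil => intro p; simp [wordMap]
    | cons i w ih =>
      intro p
      have hcons : wordMap φ (i :: w) p = φ i (wordMap φ w p) := rfl
      obtain ⟨h0, h1⟩ := ih p
      obtain ⟨g0, g1⟩ := hφ i (wordMap φ w p)
      rw [hcons]
      constructor
      · rw [g0, h0]; simp only [wA_cons, wR_cons]; ring
      · rw [g1, h1]; simp only [wA_cons, wR_cons]; ring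
  -- one-letter bounds from `hmaps`
  have hone : ∀ i, a i + r i ≤ 1 ∧ b i + s i ≤ 1 := by
    intro i
    set p : EuclideanSpace ℝ (Fin 2) := (WithLp.equiv 2 (Fin 2 → ℝ)).symm ![1, 1] with hp
    have hp0 : p 0 = 1 := rfl
    have hp1 : p 1 = 1 := rfl
    have hpQ : p ∈ unitSq := by
      constructor <;> simp [hp0, hp1]
    have := hmaps i ⟨p, hpQ, rfl⟩
    obtain ⟨h0, h1⟩ := this
    obtain ⟨g0, g1⟩ := hφ i p
    rw [g0, hp0] at h0
    rw [g1, hp1] at h1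
    constructor
    · have := h0.2; linarith
    · have := h1.2; linarith
  have hone1 : ∀ i, a i + r i ≤ 1 := fun i => (hone i).1
  have hone2 : ∀ i, b i + s i ≤ 1 := fun i => (hone i).2
  -- image of the square is contained in its rectangle
  have himgrect : ∀ (w : List (Fin κ)) (q : EuclideanSpace ℝ (Fin 2)),
      q ∈ wordMap φ w '' unitSq →
      (wA r a w ≤ q 0 ∧ q 0 ≤ wA r a w + wR r w) ∧
      (wA s b w ≤ q 1 ∧ q 1 ≤ wA s b w + wR s w) := by
    rintro w q ⟨p, hp, rfl⟩
    obtain ⟨h0, h1⟩ := hcoord w p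
    obtain ⟨⟨hp00, hp01⟩, ⟨hp10, hp11⟩⟩ := hp
    have hR := wR_pos hr w
    have hS := wR_pos hs w
    constructor
    · rw [h0]; constructor <;> nlinarith
    · rw [h1]; constructor <;> nlinarith
  -- image of the square under a word map stays in the square
  have himgQ : ∀ w : List (Fin κ), wordMap φ w '' unitSq ⊆ unitSq := by
    intro w
    induction w with
    | nil => simp [wordMap]
    | cons i w ih =>
      have hcons : wordMap φ (i :: w) '' unitSq = φ i '' (wordMap φ w '' unitSq) := by
        rw [← Set.image_comp]; rfl
      rw [hcons]
      exact (Set.image_mono ih).trans (hmaps i)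
  -- the unit square is bounded
  have hQbdd : Bornology.IsBounded unitSq := by
    apply (Metric.isBounded_closedBall (x := (0 : EuclideanSpace ℝ (Fin 2))) (r := 2)).subset
    intro p hp
    obtain ⟨⟨h00, h01⟩, ⟨h10, h11⟩⟩ := hp
    rw [Metric.mem_closedBall, dist_coord]
    have hz : (0 : EuclideanSpace ℝ (Fin 2)) 0 = 0 := rfl
    have hz1 : (0 : EuclideanSpace ℝ (Fin 2)) 1 = 0 := rfl
    rw [hz, hz1]
    have : (p 0 - 0)^2 + (p 1 - 0)^2 ≤ 4 := by nlinarith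
    calc Real.sqrt ((p 0 - 0)^2 + (p 1 - 0)^2) ≤ Real.sqrt 4 := Real.sqrt_le_sqrt this
    _ = 2 := by rw [show (4:ℝ) = 2^2 by norm_num, Real.sqrt_sq (by norm_num)]
  have hbdd : ∀ w : List (Fin κ), Bornology.IsBounded (wordMap φ w '' unitSq) :=
    fun w => hQbdd.subset (himgQ w)
  -- diameter upper bound
  have hdiamle : ∀ w : List (Fin κ),
      diam (wordMap φ w '' unitSq) ≤ Real.sqrt ((wR r w)^2 + (wR s w)^2) := by
    intro w
    apply Metric.diam_le_of_forall_dist_le (Real.sqrt_nonneg _)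
    intro p hp q hq
    obtain ⟨⟨hpa, hpb⟩, ⟨hpc, hpd⟩⟩ := himgrect w p hp
    obtain ⟨⟨hqa, hqb⟩, ⟨hqc, hqd⟩⟩ := himgrect w q hq
    rw [dist_coord]
    apply Real.sqrt_le_sqrt
    nlinarith
  intro x hx t ht
  -- M is positive
  have hM0 : 0 < M := by
    by_contra h
    push_neg at h
    interval_cases M
    have := hM ⟨0, by omega⟩
    simp at this
    nlinarith [Real.sqrt_nonneg (2:ℝ), this]
  have hMR : (0:ℝ) < M := by exact_mod_cast hM0
  set ℓ := t / M with hℓdef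
  have hl : 0 < ℓ := div_pos ht hMR
  have hsqrt2 : (0:ℝ) < Real.sqrt 2 := Real.sqrt_pos.2 (by norm_num)
  -- membership in Γ forces a long side in each word
  have hside : ∀ w ∈ affGammaXR φ x t, ℓ < max (wR r w) (wR s w) := by
    intro w hw
    obtain ⟨hne, hdw, hdp, hint⟩ := hw
    set i := w.getLast hne with hi
    set u := w.dropLast with hu
    have hwu : u ++ [i] = w := List.dropLast_append_getLast hne
    have hRu := wR_pos hr u
    have hSu := wR_pos hs u
    set m := max (wR r u) (wR s u) with hm
    have hm0 : 0 < m := lt_max_of_lt_left hRu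
    -- t < √2 * m
    have h1 : t < Real.sqrt 2 * m := by
      have h2 : diam (wordMap φ u '' unitSq) ≤ Real.sqrt ((wR r u)^2 + (wR s u)^2) :=
        hdiamle u
      have h3 : Real.sqrt ((wR r u)^2 + (wR s u)^2) ≤ Real.sqrt (2 * m^2) := by
        apply Real.sqrt_le_sqrt
        have ha' : wR r u ≤ m := le_max_left _ _
        have hb' : wR s u ≤ m := le_max_right _ _
        nlinarith
      have h4 : Real.sqrt (2 * m^2) = Real.sqrt 2 * m := by
        rw [Real.sqrt_mul (by norm_num), Real.sqrt_sq hm0.le]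
      calc t < diam (wordMap φ u '' unitSq) := hdp
      _ ≤ Real.sqrt (2 * m^2) := le_trans h2 h3
      _ = Real.sqrt 2 * m := h4
    -- long-side comparison
    have h5 : min (r i) (s i) * m ≤ max (wR r w) (wR s w) := by
      rw [← hwu, wR_append, wR_append]
      have hri : wR r [i] = r i := by simp
      have hsi : wR s [i] = s i := by simp
      rw [hri, hsi]
      rcases le_total (wR r u) (wR s u) with h | h
      · have hmm : m = wR s u := max_eq_right h
        calc min (r i) (s i) * m = min (r i) (s i) * wR s u := by rw [hmm]
        _ ≤ s i * wR s u := mul_le_mul_of_nonneg_right (min_le_right _ _) hSu.le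
        _ = wR s u * s i := by ring
        _ ≤ max (wR r u * r i) (wR s u * s i) := le_max_right _ _
      · have hmm : m = wR r u := max_eq_left h
        calc min (r i) (s i) * m = min (r i) (s i) * wR r u := by rw [hmm]
        _ ≤ r i * wR r u := mul_le_mul_of_nonneg_right (min_le_left _ _) hRu.le
        _ = wR r u * r i := by ring
        _ ≤ max (wR r u * r i) (wR s u * s i) := le_max_left _ _
    -- min > √2 / M
    have hmin0 : 0 < min (r i) (s i) := lt_min (hr i) (hs i)
    have h6 : Real.sqrt 2 / M < min (r i) (s i) := by
      rw [div_lt_iff₀ hMR]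
      have := hM i
      linarith [mul_comm (min (r i) (s i)) (M:ℝ)]
    -- conclude
    have h7 : ℓ < min (r i) (s i) * (t / Real.sqrt 2) := by
      have heq : ℓ = (Real.sqrt 2 / M) * (t / Real.sqrt 2) := by
        rw [hℓdef]; field_simp
      rw [heq]
      apply mul_lt_mul_of_pos_right h6 (div_pos ht hsqrt2)
    have h8 : t / Real.sqrt 2 < m := by
      rw [div_lt_iff₀ hsqrt2]
      linarith [mul_comm m (Real.sqrt 2)]
    calc ℓ < min (r i) (s i) * (t / Real.sqrt 2) := h7
    _ ≤ min (r i) (s i) * m := by nlinarith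
    _ ≤ max (wR r w) (wR s w) := h5
  -- no word in Γ is a prefix of another
  have hnp : ∀ w ∈ affGammaXR φ x t, ∀ w' ∈ affGammaXR φ x t, w ≠ w' → ¬ w <+: w' := by
    intro w hw w' hw' hne hpre
    obtain ⟨z, rfl⟩ := hpre
    have hz : z ≠ [] := by rintro rfl; simp at hne
    have hdl : (w ++ z).dropLast = w ++ z.dropLast :=
      List.dropLast_append_of_ne_nil hz
    obtain ⟨_, hdw, _, _⟩ := hw
    obtain ⟨_, _, hdp', _⟩ := hw'
    rw [hdl] at hdp'
    have hcomp : wordMap φ (w ++ z.dropLast) = wordMap φ w ∘ wordMap φ z.dropLast :=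
      UFCPaux.wordMap_append φ w z.dropLast
    have hsub : wordMap φ (w ++ z.dropLast) '' unitSq ⊆ wordMap φ w '' unitSq := by
      rw [hcomp, Set.image_comp]
      exact Set.image_mono (himgQ _)
    have := Metric.diam_mono hsub (hbdd w)
    linarith
  -- pairwise disjointness of open shadows in both coordinates
  have hdisjInt : ∀ w ∈ affGammaXR φ x t, ∀ w' ∈ affGammaXR φ x t, w ≠ w' →
      (Ioo (wA r a w) (wA r a w + wR r w) ∩ Ioo (wA r a w') (wA r a w' + wR r w') = ∅) ∧
      (Ioo (wA s b w) (wA s b w + wR s w) ∩ Ioo (wA s b w') (wA s b w' + wR s w') = ∅) := by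
    intro w hw w' hw' hne
    obtain ⟨u, i, j, v₁, v₂, hij, e1, e2⟩ :=
      exists_split w w' (hnp w hw w' hw' hne) (hnp w' hw' w hw (Ne.symm hne))
    subst e1; subst e2
    constructor
    · exact interval_disj hr (fun i => (ha i).le) hone1 hdisjx u i j v₁ v₂ hij
    · exact interval_disj hs (fun i => (hb i).le) hone2 hdisjy u i j v₁ v₂ hij
  -- shadows meet the windows around x
  have hproj : ∀ w ∈ affGammaXR φ x t,
      (∃ z, wA r a w ≤ z ∧ z ≤ wA r a w + wR r w ∧ x 0 - t < z ∧ z < x 0 + t) ∧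
      (∃ z, wA s b w ≤ z ∧ z ≤ wA s b w + wR s w ∧ x 1 - t < z ∧ z < x 1 + t) := by
    intro w hw
    obtain ⟨_, _, _, q, hq1, hq2⟩ := hw
    obtain ⟨⟨ha1, ha2⟩, ⟨hb1, hb2⟩⟩ := himgrect w q hq1
    rw [Metric.mem_ball, dist_coord] at hq2
    have h0 : |q 0 - x 0| < t := by
      have : |q 0 - x 0| = Real.sqrt ((q 0 - x 0)^2) := (Real.sqrt_sq_eq_abs _).symm
      rw [this]
      calc Real.sqrt ((q 0 - x 0)^2) ≤ Real.sqrt ((q 0 - x 0)^2 + (q 1 - x 1)^2) := by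
            apply Real.sqrt_le_sqrt; nlinarith [sq_nonneg (q 1 - x 1)]
      _ < t := hq2
    have h1 : |q 1 - x 1| < t := by
      have : |q 1 - x 1| = Real.sqrt ((q 1 - x 1)^2) := (Real.sqrt_sq_eq_abs _).symm
      rw [this]
      calc Real.sqrt ((q 1 - x 1)^2) ≤ Real.sqrt ((q 0 - x 0)^2 + (q 1 - x 1)^2) := by
            apply Real.sqrt_le_sqrt; nlinarith [sq_nonneg (q 0 - x 0)]
      _ < t := hq2
    rw [abs_lt] at h0 h1
    exact ⟨⟨q 0, ha1, ha2, by linarith [h0.1], by linarith [h0.2]⟩,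
      ⟨q 1, hb1, hb2, by linarith [h1.1], by linarith [h1.2]⟩⟩
  -- counting bound for arbitrary finite subsets of Γ
  have hcount : ∀ F : Finset (List (Fin κ)), ↑F ⊆ affGammaXR φ x t → F.card ≤ 4 * M + 2 := by
    intro F hF
    set Fx := F.filter (fun w => ℓ < wR r w) with hFx
    set Fy := F.filter (fun w => ¬ ℓ < wR r w) with hFy
    have hcards : Fx.card + Fy.card = F.card :=
      Finset.card_filter_add_card_filter_not _
    have hxcard : Fx.card ≤ 2 * M + 1 := by
      apply count1d M ℓ (x 0 - t) (x 0 + t) hl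
        (by
          rw [hℓdef]
          have h2t : 2 * (M:ℝ) * (t / ↑M) = 2 * t := by field_simp
          linarith) (fun w => wA r a w) (fun w => wA r a w + wR r w)
      · intro w hw
        rw [hFx, Finset.mem_filter] at hw
        linarith [hw.2]
      · intro w hw w' hw' hne
        rw [hFx, Finset.mem_filter] at hw hw'
        exact (hdisjInt w (hF hw.1) w' (hF hw'.1) hne).1
      · intro w hw
        rw [hFx, Finset.mem_filter] at hw
        exact (hproj w (hF hw.1)).1
    have hycard : Fy.card ≤ 2 * M + 1 := by
      apply count1d M ℓ (x 1 - t) (x 1 + t) hl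
        (by
          rw [hℓdef]
          have h2t : 2 * (M:ℝ) * (t / ↑M) = 2 * t := by field_simp
          linarith) (fun w => wA s b w) (fun w => wA s b w + wR s w)
      · intro w hw
        rw [hFy, Finset.mem_filter] at hw
        have := hside w (hF hw.1)
        rcases max_cases (wR r w) (wR s w) with ⟨he, _⟩ | ⟨he, _⟩
        · rw [he] at this; exact absurd this hw.2
        · rw [he] at this; linarith
      · intro w hw w' hw' hne
        rw [hFy, Finset.mem_filter] at hw hw'
        exact (hdisjInt w (hF hw.1) w' (hF hw'.1) hne).2
      · intro w hw
        rw [hFy, Finset.mem_filter] at hw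
        exact (hproj w (hF hw.1)).2
    omega
  -- finiteness
  have hfin : (affGammaXR φ x t).Finite := by
    by_contra hinf
    obtain ⟨F, hFs, hFc⟩ := (Set.Infinite.mono (le_refl _) hinf : (affGammaXR φ x t).Infinite).exists_subset_card_eq (4 * M + 3)
    have := hcount F hFs
    omega
  refine ⟨hfin, ?_⟩
  rw [Set.ncard_eq_toFinset_card _ hfin]
  exact hcount hfin.toFinset (by simp)
end

section
/- In the setting of diagonal self-affine systems on Q = [0,1]² with maps φ_i(x,y) = (r_i x, s_i y) + (a_i, b_i): if there exist indices i ≠ j with s_i = s_j and b_i = b_j, and an index k with r_k < s_k, then the iterated function system does not satisfy the uniform finite clustering property. -/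
open Metric Set

namespace DiagAux

variable {κ : ℕ}

noncomputable def pt (u v : ℝ) : EuclideanSpace ℝ (Fin 2) := (WithLp.equiv 2 (Fin 2 → ℝ)).symm ![u, v]

@[simp] lemma pt_zero (u v : ℝ) : pt u v 0 = u := rfl
@[simp] lemma pt_one (u v : ℝ) : pt u v 1 = v := rfl

lemma pt_mem {u v : ℝ} (hu : u ∈ Icc (0:ℝ) 1) (hv : v ∈ Icc (0:ℝ) 1) : pt u v ∈ unitSq := ⟨hu, hv⟩

def affOff (r a : Fin κ → ℝ) : List (Fin κ) → ℝ
  | [] => 0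
  | x :: w => r x * affOff r a w + a x

lemma wordMap_cons {X : Type*} (φ : Fin κ → X → X) (x : Fin κ) (w : List (Fin κ)) :
    wordMap φ (x :: w) = φ x ∘ wordMap φ w := rfl

lemma wordMap_append {X : Type*} (φ : Fin κ → X → X) (u v : List (Fin κ)) :
    wordMap φ (u ++ v) = wordMap φ u ∘ wordMap φ v := by
  induction u with
  | nil => rfl
  | cons x u ih =>
      show φ x ∘ wordMap φ (u ++ v) = (φ x ∘ wordMap φ u) ∘ wordMap φ v
      rw [ih]; rfl

variable (r s a b : Fin κ → ℝ)
variable (φ : Fin κ → EuclideanSpace ℝ (Fin 2) → EuclideanSpace ℝ (Fin 2))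

lemma wordMap_apply (hφ : ∀ i p, φ i p 0 = r i * p 0 + a i ∧ φ i p 1 = s i * p 1 + b i)
    (w : List (Fin κ)) (p : EuclideanSpace ℝ (Fin 2)) :
    wordMap φ w p 0 = (w.map r).prod * p 0 + affOff r a w ∧
    wordMap φ w p 1 = (w.map s).prod * p 1 + affOff s b w := by
  induction w with
  | nil => simp [wordMap, affOff]
  | cons x w ih =>
      rw [wordMap_cons]
      refine ⟨?_, ?_⟩
      · show φ x (wordMap φ w p) 0 = _
        rw [(hφ x _).1, ih.1, affOff]
        simp only [List.map_cons, List.prod_cons]; ring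
      · show φ x (wordMap φ w p) 1 = _
        rw [(hφ x _).2, ih.2, affOff]
        simp only [List.map_cons, List.prod_cons]; ring

lemma wordMap_mem (hmaps : ∀ i, φ i '' unitSq ⊆ unitSq)
    (w : List (Fin κ)) {p : EuclideanSpace ℝ (Fin 2)} (hp : p ∈ unitSq) :
    wordMap φ w p ∈ unitSq := by
  induction w with
  | nil => exact hp
  | cons x w ih => exact hmaps x ⟨_, ih, rfl⟩

lemma affOff_append (u v : List (Fin κ)) :
    affOff r a (u ++ v) = (u.map r).prod * affOff r a v + affOff r a u := by
  induction u with
  | nil => simp [affOff]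
  | cons x u ih =>
      show affOff r a (x :: (u ++ v)) = _
      rw [affOff, ih, affOff]
      simp only [List.map_cons, List.prod_cons]; ring

lemma affOff_const {i j : Fin κ} (hsij : s i = s j) (hbij : b i = b j) :
    ∀ c : List (Fin κ), (∀ y ∈ c, y = i ∨ y = j) →
      affOff s b c = affOff s b (List.replicate c.length i) := by
  intro c
  induction c with
  | nil => intro _; rfl
  | cons x c ih =>
      intro hc
      have hx := hc x (List.mem_cons_self (a := x) (l := c))
      have hsx : s x = s i := by rcases hx with h | h <;> rw [h]; exact hsij.symm
      have hbx : b x = b i := by rcases hx with h | h <;> rw [h]; exact hbij.symm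
      have hrest := ih (fun y hy => hc y (List.mem_cons_of_mem _ hy))
      show s x * affOff s b c + b x = affOff s b (List.replicate (c.length + 1) i)
      rw [List.replicate_succ, affOff, hsx, hbx, hrest]

lemma prod_const {i j : Fin κ} (hsij : s i = s j) :
    ∀ c : List (Fin κ), (∀ y ∈ c, y = i ∨ y = j) → (c.map s).prod = s i ^ c.length := by
  intro c
  induction c with
  | nil => intro _; simp
  | cons x c ih =>
      intro hc
      have hx := hc x (List.mem_cons_self (a := x) (l := c))
      have hsx : s x = s i := by rcases hx with h | h <;> rw [h]; exact hsij.symm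
      simp only [List.map_cons, List.prod_cons, List.length_cons,
        ih (fun y hy => hc y (List.mem_cons_of_mem _ hy)), hsx, pow_succ]
      ring

lemma prod_bounds (hrpos : ∀ x, 0 < r x) {i j : Fin κ} (hi : r i ≤ 1) (hj : r j ≤ 1) :
    ∀ c : List (Fin κ), (∀ y ∈ c, y = i ∨ y = j) →
      0 < (c.map r).prod ∧ (c.map r).prod ≤ 1 := by
  intro c
  induction c with
  | nil => intro _; simp
  | cons x c ih =>
      intro hc
      have hx := hc x (List.mem_cons_self (a := x) (l := c))
      have hx1 : r x ≤ 1 := by rcases hx with h | h <;> rw [h] <;> assumption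
      obtain ⟨h1, h2⟩ := ih (fun y hy => hc y (List.mem_cons_of_mem _ hy))
      simp only [List.map_cons, List.prod_cons]
      constructor
      · exact mul_pos (hrpos x) h1
      · calc r x * (c.map r).prod ≤ 1 * 1 := by
              apply mul_le_mul hx1 h2 h1.le; linarith
          _ = 1 := by ring

lemma unitSq_bounded : Bornology.IsBounded unitSq := by
  rw [Metric.isBounded_iff]
  refine ⟨2, fun p hp q hq => ?_⟩
  obtain ⟨⟨hp0, hp0'⟩, hp1, hp1'⟩ := hp
  obtain ⟨⟨hq0, hq0'⟩, hq1, hq1'⟩ := hq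
  rw [EuclideanSpace.dist_eq, Fin.sum_univ_two]
  have h0 : dist (p 0) (q 0) ≤ 1 := by
    rw [Real.dist_eq]; rw [abs_le]; constructor <;> linarith
  have h1 : dist (p 1) (q 1) ≤ 1 := by
    rw [Real.dist_eq]; rw [abs_le]; constructor <;> linarith
  have : dist (p 0) (q 0) ^ 2 + dist (p 1) (q 1) ^ 2 ≤ 4 := by
    nlinarith [dist_nonneg (x := p 0) (y := q 0), dist_nonneg (x := p 1) (y := q 1)]
  calc Real.sqrt (dist (p 0) (q 0) ^ 2 + dist (p 1) (q 1) ^ 2) ≤ Real.sqrt 4 :=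
        Real.sqrt_le_sqrt this
    _ = 2 := by rw [show (4:ℝ) = 2^2 by norm_num, Real.sqrt_sq (by norm_num)]

end DiagAux

set_option maxHeartbeats 1000000 in
open DiagAux in
/-- a diagonal self-affine system on the unit square with two maps
sharing the same `y`-data (`sᵢ = sⱼ`, `bᵢ = bⱼ`, `i ≠ j`) and some map with
`r_k < s_k` does not satisfy the uniform finite clustering property. -/
theorem diagonal_affine_not_ufcp {κ : ℕ} (hκ : 2 ≤ κ)
    (r s a b : Fin κ → ℝ) (hr : ∀ i, 0 < r i) (hs : ∀ i, 0 < s i)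
    (ha : ∀ i, 0 < a i) (hb : ∀ i, 0 < b i)
    (φ : Fin κ → EuclideanSpace ℝ (Fin 2) → EuclideanSpace ℝ (Fin 2))
    (hφ : ∀ i p, φ i p 0 = r i * p 0 + a i ∧ φ i p 1 = s i * p 1 + b i)
    (hmaps : ∀ i, φ i '' unitSq ⊆ unitSq)
    (i j : Fin κ) (hij : i ≠ j) (hsij : s i = s j) (hbij : b i = b j)
    (k : Fin κ) (hk : r k < s k) :
    ¬ ∃ M : ℕ, ∀ x : EuclideanSpace ℝ (Fin 2), ∀ t : ℝ, 0 < t →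
      (affGammaXR φ x t).Finite ∧ (affGammaXR φ x t).ncard ≤ M := by
  classical
  rintro ⟨M, hM⟩
  have happly := wordMap_apply r s a b φ hφ
  -- contraction facts
  have hcontr : ∀ x : Fin κ, r x < 1 ∧ s x < 1 := by
    intro x
    have hmem : φ x (pt 1 1) ∈ unitSq :=
      hmaps x ⟨pt 1 1, pt_mem (by norm_num) (by norm_num), rfl⟩
    have h0 := hmem.1.2
    have h1 := hmem.2.2
    rw [(hφ x _).1] at h0
    rw [(hφ x _).2] at h1
    simp only [pt_zero, pt_one, mul_one] at h0 h1
    exact ⟨by linarith [ha x], by linarith [hb x]⟩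
  have hsi1 : s i < 1 := (hcontr i).2
  have hsi0 : 0 < s i := hs i
  have hsk0 : 0 < s k := hs k
  have hrk0 : 0 < r k := hr k
  have hri : r i ≤ 1 := (hcontr i).1.le
  have hrj : r j ≤ 1 := (hcontr j).1.le
  -- choose m
  have hρ0 : 0 < r k / s k := div_pos hrk0 hsk0
  have hρ1 : r k / s k < 1 := (div_lt_one hsk0).2 hk
  have hε : 0 < s i ^ (2*M) * (1 - s i ^ 2) := by
    have h2 : s i ^ 2 < 1 := by nlinarith
    have := pow_pos hsi0 (2*M)
    nlinarith
  obtain ⟨m0, hm0⟩ := exists_pow_lt_of_lt_one hε hρ1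
  set m := m0 + 1 with hmdef
  have hkey : (r k / s k) ^ (2*m) < s i ^ (2*M) * (1 - s i ^ 2) :=
    lt_of_le_of_lt (pow_le_pow_of_le_one hρ0.le hρ1.le (by omega)) hm0
  set S : ℝ := s k ^ m * s i ^ (M+1) with hSdef
  set V : ℝ := s k ^ m * s i ^ M with hVdef
  have hS0 : 0 < S := by positivity
  have hV0 : 0 < V := by positivity
  have hkey' : (r k ^ m)^2 + S^2 < V^2 := by
    rw [div_pow] at hkey
    have h2 : (r k) ^ (2*m) < s i ^ (2*M) * (1 - s i ^ 2) * (s k) ^ (2*m) :=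
      (div_lt_iff₀ (by positivity)).1 hkey
    have e1 : (r k : ℝ) ^ (2*m) = (r k ^ m)^2 := by rw [two_mul, pow_add, sq]
    have e2 : (s k : ℝ) ^ (2*m) = (s k ^ m)^2 := by rw [two_mul, pow_add, sq]
    have e3 : (s i : ℝ) ^ (2*M) = (s i ^ M)^2 := by rw [two_mul, pow_add, sq]
    rw [e1, e2, e3] at h2
    have e4 : (s i : ℝ) ^ (M+1) = s i ^ M * s i := pow_succ _ _
    rw [hSdef, hVdef, e4]
    nlinarith [h2]
  set t : ℝ := Real.sqrt ((r k ^ m)^2 + S^2) with htdef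
  have ht0 : 0 < t := Real.sqrt_pos.2 (by positivity)
  have htV : t < V := by
    have h := Real.sqrt_lt_sqrt (by positivity) hkey'
    rwa [Real.sqrt_sq hV0.le] at h
  have hrkt : r k ^ m < t := by
    have h := Real.sqrt_lt_sqrt (sq_nonneg (r k ^ m))
      (by nlinarith : (r k ^ m)^2 < (r k ^ m)^2 + S^2)
    rwa [Real.sqrt_sq (by positivity)] at h
  set km : List (Fin κ) := List.replicate m k with hkmdef
  set w₀ : List (Fin κ) := km ++ List.replicate (M+1) i with hw₀def
  set x : EuclideanSpace ℝ (Fin 2) := wordMap φ w₀ (pt 0 0) with hxdef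
  obtain ⟨hfin, hcard⟩ := hM x t ht0
  -- products over km
  have hkmr : (km.map r).prod = r k ^ m := by
    rw [hkmdef, List.map_replicate, List.prod_replicate]
  have hkms : (km.map s).prod = s k ^ m := by
    rw [hkmdef, List.map_replicate, List.prod_replicate]
  have hrep : ∀ y ∈ List.replicate (M+1) i, y = i ∨ y = j :=
    fun y hy => Or.inl (List.eq_of_mem_replicate hy)
  have hpt00 : pt 0 0 ∈ unitSq := pt_mem (by norm_num) (by norm_num)
  have hpt01 : pt 0 1 ∈ unitSq := pt_mem (by norm_num) (by norm_num)
  have hAoff : ∀ c : List (Fin κ), affOff r a c ∈ Icc (0:ℝ) 1 := by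
    intro c
    have h := (wordMap_mem φ hmaps c hpt00).1
    rw [(happly c (pt 0 0)).1] at h
    simpa using h
  -- the main membership lemma
  have hGamma : ∀ c : List (Fin κ), c.length = M+1 → (∀ y ∈ c, y = i ∨ y = j) →
      (km ++ c) ∈ affGammaXR φ x t := by
    intro c hclen hcmem
    have hcne : c ≠ [] := by
      intro h; rw [h] at hclen; simp at hclen
    have hcs : (c.map s).prod = s i ^ (M+1) := by
      rw [prod_const s hsij c hcmem, hclen]
    obtain ⟨hcr0, hcr1⟩ := prod_bounds r hr hri hrj c hcmem
    set w : List (Fin κ) := km ++ c with hwdef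
    have hws : (w.map s).prod = S := by
      rw [hwdef, List.map_append, List.prod_append, hkms, hcs]
    have hwr0 : 0 < (w.map r).prod := by
      rw [hwdef, List.map_append, List.prod_append, hkmr]
      positivity
    have hwr1 : (w.map r).prod ≤ r k ^ m := by
      rw [hwdef, List.map_append, List.prod_append, hkmr]
      exact mul_le_of_le_one_right (pow_pos hrk0 m).le hcr1
    refine ⟨?_, ?_, ?_, ?_⟩
    · -- w ≠ []
      intro h
      exact hcne (List.append_eq_nil_iff.mp h).2
    · -- diam ≤ t
      apply Metric.diam_le_of_forall_dist_le (Real.sqrt_nonneg _)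
      rintro p ⟨p', hp', rfl⟩ q ⟨q', hq', rfl⟩
      rw [EuclideanSpace.dist_eq, Fin.sum_univ_two]
      have d0 : dist (wordMap φ w p' 0) (wordMap φ w q' 0) ≤ r k ^ m := by
        rw [Real.dist_eq, (happly w p').1, (happly w q').1]
        have e : (w.map r).prod * p' 0 + affOff r a w -
            ((w.map r).prod * q' 0 + affOff r a w) = (w.map r).prod * (p' 0 - q' 0) := by ring
        rw [e, abs_mul, abs_of_pos hwr0]
        have h1 : |p' 0 - q' 0| ≤ 1 := by
          obtain ⟨⟨u1, u2⟩, -⟩ := hp'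
          obtain ⟨⟨v1, v2⟩, -⟩ := hq'
          rw [abs_le]; constructor <;> linarith
        calc (w.map r).prod * |p' 0 - q' 0| ≤ r k ^ m * 1 :=
              mul_le_mul hwr1 h1 (abs_nonneg _) (pow_pos hrk0 m).le
          _ = r k ^ m := mul_one _
      have d1 : dist (wordMap φ w p' 1) (wordMap φ w q' 1) ≤ S := by
        rw [Real.dist_eq, (happly w p').2, (happly w q').2]
        have e : (w.map s).prod * p' 1 + affOff s b w -
            ((w.map s).prod * q' 1 + affOff s b w) = (w.map s).prod * (p' 1 - q' 1) := by ring
        rw [e, abs_mul, hws, abs_of_pos hS0]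
        have h1 : |p' 1 - q' 1| ≤ 1 := by
          obtain ⟨-, u1, u2⟩ := hp'
          obtain ⟨-, v1, v2⟩ := hq'
          rw [abs_le]; constructor <;> linarith
        exact mul_le_of_le_one_right hS0.le h1
      refine Real.sqrt_le_sqrt ?_
      have := pow_le_pow_left₀ dist_nonneg d0 2
      have := pow_le_pow_left₀ dist_nonneg d1 2
      linarith
    · -- t < diam of dropLast
      rw [hwdef, List.dropLast_append_of_ne_nil hcne]
      set w' : List (Fin κ) := km ++ c.dropLast with hw'def
      have hc'mem : ∀ y ∈ c.dropLast, y = i ∨ y = j :=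
        fun y hy => hcmem y ((List.dropLast_sublist c).subset hy)
      have hc'len : c.dropLast.length = M := by
        rw [List.length_dropLast, hclen]
        omega
      have hw's : (w'.map s).prod = V := by
        rw [hw'def, List.map_append, List.prod_append, hkms,
          prod_const s hsij _ hc'mem, hc'len]
      have himg : wordMap φ w' '' unitSq ⊆ unitSq := by
        rintro z ⟨p', hp', rfl⟩
        exact wordMap_mem φ hmaps w' hp'
      set P1 := wordMap φ w' (pt 0 0) with hP1def
      set P2 := wordMap φ w' (pt 0 1) with hP2def
      have e : P2 1 - P1 1 = V := by
        rw [hP1def, hP2def, (happly w' (pt 0 1)).2, (happly w' (pt 0 0)).2, hw's]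
        simp
      have hdist : V ≤ dist P1 P2 := by
        have habs : |P1 1 - P2 1| = V := by
          rw [abs_sub_comm, e, abs_of_pos hV0]
        calc V = |P1 1 - P2 1| := habs.symm
          _ = Real.sqrt (dist (P1 1) (P2 1) ^ 2) := by
              rw [Real.sqrt_sq dist_nonneg, Real.dist_eq]
          _ ≤ dist P1 P2 := by
              rw [EuclideanSpace.dist_eq, Fin.sum_univ_two]
              exact Real.sqrt_le_sqrt (le_add_of_nonneg_left (by positivity))
      calc t < V := htV
        _ ≤ dist P1 P2 := hdist
        _ ≤ diam (wordMap φ w' '' unitSq) :=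
            Metric.dist_le_diam_of_mem (unitSq_bounded.subset himg)
              ⟨pt 0 0, hpt00, rfl⟩ ⟨pt 0 1, hpt01, rfl⟩
    · -- nonempty intersection
      refine ⟨wordMap φ w (pt 0 0), ⟨pt 0 0, hpt00, rfl⟩, ?_⟩
      rw [mem_ball]
      set z := wordMap φ w (pt 0 0) with hzdef
      have hz1 : z 1 = x 1 := by
        rw [hzdef, hxdef, (happly w (pt 0 0)).2, (happly w₀ (pt 0 0)).2]
        simp only [pt_one, mul_zero, zero_add]
        rw [hwdef, hw₀def, affOff_append, affOff_append,
          affOff_const s b hsij hbij c hcmem, hclen,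
          affOff_const s b hsij hbij (List.replicate (M+1) i) hrep,
          List.length_replicate]
      have hz0 : dist (z 0) (x 0) ≤ r k ^ m := by
        rw [hzdef, hxdef, Real.dist_eq, (happly w (pt 0 0)).1, (happly w₀ (pt 0 0)).1]
        simp only [pt_zero, mul_zero, zero_add]
        rw [hwdef, hw₀def, affOff_append, affOff_append]
        have e : (km.map r).prod * affOff r a c + affOff r a km -
            ((km.map r).prod * affOff r a (List.replicate (M+1) i) + affOff r a km) =
            (km.map r).prod * (affOff r a c - affOff r a (List.replicate (M+1) i)) := by ring
        rw [e, abs_mul, hkmr, abs_of_pos (pow_pos hrk0 m)]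
        have h1 : |affOff r a c - affOff r a (List.replicate (M+1) i)| ≤ 1 := by
          obtain ⟨u1, u2⟩ := hAoff c
          obtain ⟨v1, v2⟩ := hAoff (List.replicate (M+1) i)
          rw [abs_le]; constructor <;> linarith
        exact mul_le_of_le_one_right (pow_pos hrk0 m).le h1
      have : dist z x ≤ r k ^ m := by
        rw [EuclideanSpace.dist_eq, Fin.sum_univ_two, hz1, dist_self]
        calc Real.sqrt (dist (z 0) (x 0) ^ 2 + 0 ^ 2)
            = Real.sqrt (dist (z 0) (x 0) ^ 2) := by norm_num
          _ = dist (z 0) (x 0) := Real.sqrt_sq dist_nonneg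
          _ ≤ r k ^ m := hz0
      linarith
  -- counting
  set f : (Fin (M+1) → Bool) → List (Fin κ) :=
    fun g => km ++ List.ofFn (fun t => if g t then i else j) with hfdef
  have hinj : Function.Injective f := by
    intro g g' h
    rw [hfdef] at h
    simp only [List.append_cancel_left_eq] at h
    have h3 := List.ofFn_inj.mp h
    funext u
    have := congrFun h3 u
    cases hg : g u <;> cases hg' : g' u <;> rw [hg, hg'] at this <;> simp_all
  set F : Finset (List (Fin κ)) := Finset.image f Finset.univ with hFdef
  have hsubF : ↑F ⊆ affGammaXR φ x t := by
    intro w hwF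
    rw [hFdef] at hwF
    simp only [Finset.coe_image, Finset.coe_univ, Set.image_univ, Set.mem_range] at hwF
    obtain ⟨g, rfl⟩ := hwF
    apply hGamma
    · simp [hfdef]
    · intro y hy
      simp only [List.mem_ofFn] at hy
      obtain ⟨u, hu⟩ := hy
      have hu' : (if g u = true then i else j) = y := hu
      cases hg : g u <;> rw [hg] at hu' <;> simp at hu'
      · right; exact hu'.symm
      · left; exact hu'.symm
  have hle : F.card ≤ (affGammaXR φ x t).ncard := by
    have := Set.ncard_le_ncard hsubF hfin
    rwa [Set.ncard_coe_finset] at this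
  have hFcard : F.card = 2^(M+1) := by
    rw [hFdef, Finset.card_image_of_injective _ hinj, Finset.card_univ]
    simp [Fintype.card_fun]
  have hlt : M < 2^(M+1) :=
    lt_of_lt_of_le (Nat.lt_two_pow_self (n := M)) (Nat.pow_le_pow_right (by norm_num) (Nat.le_succ M))
  omega
end

section
/- Let Γ ⊆ Σ be compact with σ(Γ) ⊆ Γ. If A' ⊆ Γ is a microset of a compact set A ⊆ Γ, and A'' ⊆ Γ is a microset of A', then A'' is a microset of A. -/
open Metric Filter Set

/-- The `2^{-n}`-metric on the sequence space `Σ = {1,…,κ}^ℕ`. -/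
noncomputable local instance seqMetric (κ : ℕ) : MetricSpace (ℕ → Fin κ) :=
  PiNat.metricSpace

/-- The cylinder set `[w]` of a finite word `w`. -/
def cylSet {κ : ℕ} (w : List (Fin κ)) : Set (ℕ → Fin κ) := {x | pre x w.length = w}

/-- The symbolic magnification `β_w(A) = σ^{|w|}(A ∩ [w])`. -/
def miniset {κ : ℕ} (w : List (Fin κ)) (A : Set (ℕ → Fin κ)) : Set (ℕ → Fin κ) :=
  (fun x => fun n => x (n + w.length)) '' (A ∩ cylSet w)

/-- `A'` is a microset of `A` (relative to `Γ`): a compact subset of `Γ` that is a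
limit, in the Hausdorff metric, of minisets `β_w(A)`. -/
def IsMicroset {κ : ℕ} (Γ A A' : Set (ℕ → Fin κ)) : Prop :=
  A' ⊆ Γ ∧ IsCompact A' ∧ ∃ w : ℕ → List (Fin κ),
    Tendsto (fun n => EMetric.hausdorffEdist (miniset (w n) A) A') atTop (nhds 0)

lemma mem_cylSet_iff {κ : ℕ} {w : List (Fin κ)} {x : ℕ → Fin κ} :
    x ∈ cylSet w ↔ ∀ i (h : i < w.length), x i = w[i] := by
  simp only [cylSet, pre, mem_setOf_eq]
  constructor
  · intro h i hi
    rw [List.getElem_of_eq h.symm hi]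
    simp
  · intro h
    apply List.ext_getElem (by simp)
    intro i h1 h2
    simpa using h i h2

lemma mem_cylSet_append_iff {κ : ℕ} {w v : List (Fin κ)} {x : ℕ → Fin κ} :
    x ∈ cylSet (w ++ v) ↔ x ∈ cylSet w ∧ (fun n => x (n + w.length)) ∈ cylSet v := by
  simp only [mem_cylSet_iff, List.length_append]
  constructor
  · intro h
    refine ⟨fun i hi => ?_, fun i hi => ?_⟩
    · rw [h i (by omega), List.getElem_append_left hi]
    · rw [h (i + w.length) (by omega)]
      rw [List.getElem_append_right (by omega)]
      congr 1
      omega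
  · rintro ⟨h1, h2⟩ i hi
    rcases lt_or_ge i w.length with h | h
    · rw [h1 i h, List.getElem_append_left h]
    · rw [List.getElem_append_right (by omega)]
      have := h2 (i - w.length) (by omega)
      simpa [Nat.sub_add_cancel h] using this

/-- bridge between `edist` and the PiNat `dist`. -/
lemma edist_lt_half_pow {κ : ℕ} {x y : ℕ → Fin κ} {k : ℕ} :
    edist x y < (1 / 2 : ENNReal) ^ k ↔ dist x y < (1 / 2 : ℝ) ^ k := by
  rw [edist_dist, show ((1 / 2 : ENNReal) ^ k) = ENNReal.ofReal ((1 / 2 : ℝ) ^ k) by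
    rw [ENNReal.ofReal_pow (by norm_num)]
    norm_num [ENNReal.ofReal_div_of_pos]]
  rw [ENNReal.ofReal_lt_ofReal_iff (by positivity)]

lemma edist_le_half_pow {κ : ℕ} {x y : ℕ → Fin κ} {k : ℕ} :
    edist x y ≤ (1 / 2 : ENNReal) ^ k ↔ dist x y ≤ (1 / 2 : ℝ) ^ k := by
  rw [edist_dist, show ((1 / 2 : ENNReal) ^ k) = ENNReal.ofReal ((1 / 2 : ℝ) ^ k) by
    rw [ENNReal.ofReal_pow (by norm_num)]
    norm_num [ENNReal.ofReal_div_of_pos]]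
  rw [ENNReal.ofReal_le_ofReal_iff (by positivity)]

lemma dist_shift_le {κ : ℕ} {L m : ℕ} {x y : ℕ → Fin κ}
    (h : dist x y ≤ (1 / 2 : ℝ) ^ (L + m)) :
    dist (fun n => x (n + L)) (fun n => y (n + L)) ≤ (1 / 2 : ℝ) ^ m := by
  rw [← PiNat.mem_cylinder_iff_dist_le, PiNat.mem_cylinder_iff] at h ⊢
  intro i hi
  exact h (i + L) (by omega)

lemma eq_of_dist_lt' {κ : ℕ} {L : ℕ} {x y : ℕ → Fin κ}
    (h : dist x y < (1 / 2 : ℝ) ^ L) {i : ℕ} (hi : i < L) : x i = y i :=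
  PiNat.apply_eq_of_dist_lt h hi.le

/-- Key estimate: magnifying by `v` expands Hausdorff distance by at most `2^{|v|}`,
provided the sets are already very close. -/
lemma key_estimate {κ : ℕ} (A B : Set (ℕ → Fin κ)) (w v : List (Fin κ)) (m : ℕ)
    (h : EMetric.hausdorffEdist (miniset w A) B < (1 / 2 : ENNReal) ^ (v.length + m)) :
    EMetric.hausdorffEdist (miniset (w ++ v) A) (miniset v B) ≤ (1 / 2 : ENNReal) ^ m := by
  set L := v.length with hL
  apply EMetric.hausdorffEdist_le_of_mem_edist
  · rintro x'' ⟨y, ⟨hyA, hycyl⟩, rfl⟩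
    rw [mem_cylSet_append_iff] at hycyl
    have hx : (fun n => y (n + w.length)) ∈ miniset w A := ⟨y, ⟨hyA, hycyl.1⟩, rfl⟩
    obtain ⟨b, hbB, hdb⟩ := EMetric.exists_edist_lt_of_hausdorffEdist_lt hx h
    rw [edist_lt_half_pow] at hdb
    have hdbL : dist (fun n => y (n + w.length)) b < (1 / 2 : ℝ) ^ L := by
      refine hdb.trans_le (pow_le_pow_of_le_one (by norm_num) (by norm_num) (by omega))
    have hbv : b ∈ cylSet v := by
      rw [mem_cylSet_iff]
      intro i hi
      rw [← eq_of_dist_lt' hdbL hi]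
      exact (mem_cylSet_iff.1 hycyl.2) i hi
    refine ⟨fun n => b (n + L), ⟨b, ⟨hbB, hbv⟩, rfl⟩, ?_⟩
    have hsh := dist_shift_le (L := L) (m := m) hdb.le
    rw [← edist_le_half_pow] at hsh
    convert hsh using 2
    funext n
    simp only [List.length_append]
    congr 1
    omega
  · rintro x'' ⟨b, ⟨hbB, hbv⟩, rfl⟩
    obtain ⟨x, hx, hdb⟩ := EMetric.exists_edist_lt_of_hausdorffEdist_lt hbB
      (lt_of_eq_of_lt EMetric.hausdorffEdist_comm h)
    obtain ⟨y, ⟨hyA, hyw⟩, rfl⟩ := hx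
    rw [edist_lt_half_pow] at hdb
    have hdbL : dist b (fun n => y (n + w.length)) < (1 / 2 : ℝ) ^ L := by
      refine hdb.trans_le (pow_le_pow_of_le_one (by norm_num) (by norm_num) (by omega))
    have hycyl : y ∈ cylSet (w ++ v) := by
      rw [mem_cylSet_append_iff]
      refine ⟨hyw, ?_⟩
      rw [mem_cylSet_iff]
      intro i hi
      have hbi : b i = y (i + w.length) := eq_of_dist_lt' hdbL hi
      rw [← hbi]
      exact (mem_cylSet_iff.1 hbv) i hi
    refine ⟨fun n => y (n + (w ++ v).length), ⟨y, ⟨hyA, hycyl⟩, rfl⟩, ?_⟩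
    have hsh := dist_shift_le (L := L) (m := m) hdb.le
    rw [← edist_le_half_pow] at hsh
    convert hsh using 2
    funext n
    simp only [List.length_append]
    congr 1
    omega

/-- a microset of a microset is a microset. -/
theorem microset_trans {κ : ℕ} (hκ : 2 ≤ κ) (Γ : Set (ℕ → Fin κ))
    (hΓc : IsCompact Γ) (hΓs : shiftMap '' Γ ⊆ Γ)
    (A A' A'' : Set (ℕ → Fin κ)) (hA : A ⊆ Γ) (hAc : IsCompact A)
    (h1 : IsMicroset Γ A A') (h2 : IsMicroset Γ A' A'') :
    IsMicroset Γ A A'' := by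
  obtain ⟨hA'Γ, hA'c, w, hw⟩ := h1
  obtain ⟨hA''Γ, hA''c, v, hv⟩ := h2
  refine ⟨hA''Γ, hA''c, ?_⟩
  have hchoice : ∀ m : ℕ, ∃ n,
      EMetric.hausdorffEdist (miniset (w n) A) A' < (1 / 2 : ENNReal) ^ ((v m).length + m) := by
    intro m
    have hpos : (0 : ENNReal) < (1 / 2 : ENNReal) ^ ((v m).length + m) :=
      ENNReal.pow_pos (by norm_num) _
    exact (hw.eventually_lt_const hpos).exists
  choose n hn using hchoice
  refine ⟨fun m => w (n m) ++ v m, ?_⟩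
  have bound : ∀ m, EMetric.hausdorffEdist (miniset (w (n m) ++ v m) A) A''
      ≤ (1 / 2 : ENNReal) ^ m + EMetric.hausdorffEdist (miniset (v m) A') A'' := by
    intro m
    calc EMetric.hausdorffEdist (miniset (w (n m) ++ v m) A) A''
        ≤ EMetric.hausdorffEdist (miniset (w (n m) ++ v m) A) (miniset (v m) A')
          + EMetric.hausdorffEdist (miniset (v m) A') A'' :=
          EMetric.hausdorffEdist_triangle
      _ ≤ _ := add_le_add (key_estimate A A' (w (n m)) (v m) m (hn m)) le_rfl
  have hupper : Tendsto
      (fun m => (1 / 2 : ENNReal) ^ m + EMetric.hausdorffEdist (miniset (v m) A') A'')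
      atTop (nhds 0) := by
    have hp : Tendsto (fun m => (1 / 2 : ENNReal) ^ m) atTop (nhds 0) :=
      ENNReal.tendsto_pow_atTop_nhds_zero_of_lt_one (by norm_num)
    simpa using Tendsto.add hp hv
  exact tendsto_of_tendsto_of_tendsto_of_le_of_le tendsto_const_nhds hupper
    (fun m => zero_le) bound
end
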